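/- arXiv:2503.00048 — 11 statements merged into one kernel-verified Lean document; each statement's English description precedes it below -/
import Mathlib

section
/- Let Q, T, I, V, Z : ℝ → ℝ be differentiable functions satisfying, for all t ≥ 0, the system Q'(t) = Λ + ϱ·T(t) − σ·Q(t) − μ₁·Q(t), T'(t) = σ·Q(t) − β·T(t)·V(t) − ϱ·T(t) − μ₂·T(t), I'(t) = β·T(t)·V(t) − μ₃·I(t) − p·I(t)·Z(t), V'(t) = ξ·I(t) − μ₄·V(t), Z'(t) = b + c·I(t)·Z(t)/(κ + I(t)) − μ₅·Z(t). If Q(0) ≥ 0, T(0) ≥ 0, I(0) ≥ 0, V(0) ≥ 0 and Z(0) ≥ 0, then Q(t) ≥ 0, T(t) ≥ 0, I(t) ≥ 0, V(t) ≥ 0 and Z(t) ≥ 0 for all t ≥ 0. -/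
/-!
The system is quasi-positive: a vanishing coordinate has nonnegative derivative as long as the
others are nonnegative. To make this strict, fix a horizon `t` and a bound `M` for the solution
on `[0, t]`; then at a point where one coordinate equals `-e` and none is below `-e`, that
coordinate's derivative is at least `-K e` with `K` depending on `M`. Adding
`ε e^{(K+1)(s-t)}` to every coordinate makes the derivative of a vanishing coordinate strictly
positive, so the shifted solution cannot leave the open orthant on `[0, t]`; let `ε → 0`.
-/

open Set Filter Topology

theorem deriv_nonpos_of_eq_zero_of_pos_left {u : ℝ → ℝ} {a s : ℝ} (hu : DifferentiableAt ℝ u s)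
    (has : a < s) (hpos : ∀ τ ∈ Ioo a s, 0 < u τ) (hs : u s = 0) : deriv u s ≤ 0 := by
  refine le_of_tendsto (hasDerivAt_iff_tendsto_slope_left_right.1 hu.hasDerivAt).1 ?_
  filter_upwards [Ioo_mem_nhdsLT has] with τ hτ
  rw [slope_def_field, hs, sub_zero]
  exact div_nonpos_of_nonneg_of_nonpos (hpos τ hτ).le (sub_nonpos.2 hτ.2.le)

theorem forall_pos_of_deriv_pos_of_eq_zero {ι : Type*} [Finite ι] {u : ι → ℝ → ℝ} {t : ℝ}
    (hu : ∀ i, Differentiable ℝ (u i)) (h0 : ∀ i, 0 < u i 0)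
    (hbdry : ∀ s ∈ Ioc 0 t, (∀ j, 0 ≤ u j s) → ∀ i, u i s = 0 → 0 < deriv (u i) s) :
    ∀ i, ∀ s ∈ Icc 0 t, 0 < u i s := by
  by_contra! hneg
  set S := Icc 0 t ∩ ⋃ i, u i ⁻¹' Iic 0
  have hS_closed : IsClosed S :=
    isClosed_Icc.inter (isClosed_iUnion_of_finite fun i ↦ isClosed_Iic.preimage (hu i).continuous)
  have hS_bdd : BddBelow S := ⟨0, fun τ hτ ↦ hτ.1.1⟩
  obtain ⟨i, s, hs, hi⟩ := hneg
  obtain ⟨⟨hS0, hSt⟩, hS⟩ := hS_closed.csInf_mem ⟨s, hs, mem_iUnion.2 ⟨i, hi⟩⟩ hS_bdd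
  set s₀ := sInf S
  obtain ⟨i₀, hi₀⟩ := mem_iUnion.1 hS
  have before : ∀ j, ∀ τ ∈ Ico 0 s₀, 0 < u j τ := fun j τ hτ ↦ by
    by_contra! h
    exact (csInf_le hS_bdd ⟨⟨hτ.1, hτ.2.le.trans hSt⟩, mem_iUnion.2 ⟨j, h⟩⟩).not_gt hτ.2
  have hs₀ : 0 < s₀ := hS0.lt_of_ne fun h ↦ (h0 i₀).not_ge (h ▸ hi₀)
  have at_s₀ : ∀ j, 0 ≤ u j s₀ := fun j ↦
    ge_of_tendsto ((hu j).continuous.continuousAt.mono_left nhdsWithin_le_nhds)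
      (eventually_of_mem (Ioo_mem_nhdsLT hs₀) fun τ hτ ↦ (before j τ (Ioo_subset_Ico_self hτ)).le)
  have hzero : u i₀ s₀ = 0 := le_antisymm hi₀ (at_s₀ i₀)
  exact (hbdry s₀ ⟨hs₀, hSt⟩ at_s₀ i₀ hzero).not_ge <|
    deriv_nonpos_of_eq_zero_of_pos_left (hu i₀ s₀) hs₀
      (fun τ hτ ↦ before i₀ τ (Ioo_subset_Ico_self hτ)) hzero

theorem nonneg_of_deriv_ge_neg_mul_of_eq_neg {ι : Type*} [Finite ι] {x : ι → ℝ → ℝ}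
    {t K ε₀ : ℝ} (hx : ∀ i, Differentiable ℝ (x i)) (h0 : ∀ i, 0 ≤ x i 0) (ht : 0 ≤ t)
    (hK : 0 ≤ K) (hε₀ : 0 < ε₀)
    (hbdry : ∀ s ∈ Ioc 0 t, ∀ e ∈ Ioo 0 ε₀, (∀ j, -e ≤ x j s) → ∀ i, x i s = -e →
      -(K * e) ≤ deriv (x i) s)
    (i : ι) : 0 ≤ x i t := by
  refine le_of_forall_pos_lt_add fun ε hε ↦ ?_
  set δ := min ε (ε₀ / 2)
  have hδ : 0 < δ := lt_min hε (half_pos hε₀)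
  set E : ℝ → ℝ := fun τ ↦ δ * Real.exp ((K + 1) * (τ - t))
  have hE_pos : ∀ τ, 0 < E τ := fun τ ↦ mul_pos hδ (Real.exp_pos _)
  have hE_lt : ∀ τ ≤ t, E τ < ε₀ := fun τ hτ ↦ calc
    E τ ≤ δ := mul_le_of_le_one_right hδ.le <| Real.exp_le_one_iff.2 <|
      mul_nonpos_of_nonneg_of_nonpos (by linarith) (sub_nonpos.2 hτ)
    _ < ε₀ := (min_le_right _ _).trans_lt (half_lt_self hε₀)
  have hE_deriv : ∀ τ, HasDerivAt E ((K + 1) * E τ) τ := fun τ ↦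
    ((((hasDerivAt_id τ).sub_const t).const_mul (K + 1)).exp.const_mul δ).congr_deriv
      (by simp only [E, id]; ring)
  have hpos := forall_pos_of_deriv_pos_of_eq_zero (u := fun j τ ↦ x j τ + E τ) (t := t)
    (fun j ↦ (hx j).add fun τ ↦ (hE_deriv τ).differentiableAt)
    (fun j ↦ add_pos_of_nonneg_of_pos (h0 j) (hE_pos 0)) ?_ i t ⟨ht, le_rfl⟩
  · have hEt : E t = δ := by simp only [E, sub_self, mul_zero, Real.exp_zero, mul_one]
    linarith [min_le_left ε (ε₀ / 2)]
  intro s hs hnn j hj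
  have hxj := hbdry s hs (E s) ⟨hE_pos s, hE_lt s hs.2⟩ (fun j' ↦ by linarith [hnn j']) j
    (by linarith)
  have hd : HasDerivAt (fun τ ↦ x j τ + E τ) (deriv (x j) s + (K + 1) * E s) s :=
    (hx j s).hasDerivAt.add (hE_deriv s)
  rw [hd.deriv]
  linarith [hE_pos s]

/-- The right-hand side of the model in the coordinates `y = (Q, T, I, V, Z)`. -/
noncomputable def hivField (Λ ϱ σ β p ξ b c κ μ₁ μ₂ μ₃ μ₄ μ₅ : ℝ) (y : Fin 5 → ℝ) : Fin 5 → ℝ :=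
  ![Λ + ϱ * y 1 - σ * y 0 - μ₁ * y 0,
    σ * y 0 - β * y 1 * y 3 - ϱ * y 1 - μ₂ * y 1,
    β * y 1 * y 3 - μ₃ * y 2 - p * y 2 * y 4,
    ξ * y 2 - μ₄ * y 3,
    b + c * y 2 * y 4 / (κ + y 2) - μ₅ * y 4]

theorem neg_mul_le_mul_of_mem_Icc {a b e M : ℝ} (he : 0 ≤ e) (hM : 0 ≤ M) (ha : a ∈ Icc (-e) M)
    (hb : b ∈ Icc (-e) M) : -(e * M) ≤ a * b := by
  obtain ⟨ha₁, ha₂⟩ := ha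
  obtain ⟨hb₁, hb₂⟩ := hb
  rcases le_total 0 a with ha0 | ha0 <;> rcases le_total 0 b with hb0 | hb0 <;> nlinarith

theorem hivField_ge_of_eq_neg {Λ ϱ σ β p ξ b c κ μ₁ μ₂ μ₃ μ₄ μ₅ : ℝ} (hΛ : 0 ≤ Λ) (hϱ : 0 ≤ ϱ)
    (hσ : 0 ≤ σ) (hβ : 0 ≤ β) (hp : 0 ≤ p) (hξ : 0 ≤ ξ) (hb : 0 ≤ b) (hc : 0 ≤ c)
    (hμ₁ : 0 ≤ μ₁) (hμ₂ : 0 ≤ μ₂) (hμ₃ : 0 ≤ μ₃) (hμ₄ : 0 ≤ μ₄) (hμ₅ : 0 ≤ μ₅)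
    {y : Fin 5 → ℝ} {e M : ℝ} (he : 0 ≤ e) (heκ : e < κ) (hM : ‖y‖ ≤ M)
    (hlow : ∀ j, -e ≤ y j) (i : Fin 5) (hi : y i = -e) :
    -((ϱ + σ + ξ + c + (β + p) * M) * e) ≤ hivField Λ ϱ σ β p ξ b c κ μ₁ μ₂ μ₃ μ₄ μ₅ y i := by
  have hM0 : 0 ≤ M := (norm_nonneg _).trans hM
  have habs j : |y j| ≤ M := (norm_le_pi_norm y j).trans hM
  have hup j : y j ≤ M := (le_abs_self _).trans (habs j)
  have hdown j : -M ≤ y j := neg_le_of_abs_le (habs j)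
  have := mul_nonneg hϱ he
  have := mul_nonneg hσ he
  have := mul_nonneg hξ he
  have := mul_nonneg hc he
  have := mul_nonneg (mul_nonneg hβ hM0) he
  have := mul_nonneg (mul_nonneg hp hM0) he
  fin_cases i <;>
    simp only [Fin.zero_eta, Fin.mk_one, Fin.reduceFinMk, Fin.isValue, hivField,
      Matrix.cons_val_zero, Matrix.cons_val_one, Matrix.cons_val] at hi ⊢ <;>
    rw [hi]
  · linarith [mul_le_mul_of_nonneg_left (hlow 1) hϱ, mul_nonneg hσ he, mul_nonneg hμ₁ he]
  · linarith [mul_le_mul_of_nonneg_left (hlow 0) hσ,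
      mul_le_mul_of_nonneg_left (hdown 3) (mul_nonneg hβ he), mul_nonneg hμ₂ he]
  · linarith [mul_le_mul_of_nonneg_left
      (neg_mul_le_mul_of_mem_Icc he hM0 ⟨hlow 1, hup 1⟩ ⟨hlow 3, hup 3⟩) hβ,
      mul_le_mul_of_nonneg_left (hdown 4) (mul_nonneg hp he), mul_nonneg hμ₃ he]
  · linarith [mul_le_mul_of_nonneg_left (hlow 2) hξ, mul_nonneg hμ₄ he]
  · have hpos : 0 < κ + y 2 := by linarith [hlow 2]
    have hfrac : -(c * e) ≤ c * y 2 * -e / (κ + y 2) := by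
      rw [le_div_iff₀ hpos]
      nlinarith [mul_nonneg (mul_nonneg hc he) (he.trans heκ.le)]
    linarith [mul_nonneg hμ₅ he]

/-- Positivity of solutions of the within-host HIV model: if a differentiable
solution starts with nonnegative initial data, it stays nonnegative for all `t ≥ 0`. -/
theorem hiv_model_nonneg
    (Λ ϱ σ β p ξ b c κ μ₁ μ₂ μ₃ μ₄ μ₅ : ℝ)
    (hΛ : 0 < Λ) (hϱ : 0 < ϱ) (hσ : 0 < σ) (hβ : 0 < β) (hp : 0 < p)
    (hξ : 0 < ξ) (hb : 0 < b) (hc : 0 < c) (hκ : 0 < κ)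
    (hμ₁ : 0 < μ₁) (hμ₂ : 0 < μ₂) (hμ₃ : 0 < μ₃) (hμ₄ : 0 < μ₄) (hμ₅ : 0 < μ₅)
    (Q T I V Z : ℝ → ℝ)
    (hQ : Differentiable ℝ Q) (hT : Differentiable ℝ T) (hI : Differentiable ℝ I)
    (hV : Differentiable ℝ V) (hZ : Differentiable ℝ Z)
    (hQ' : ∀ t, 0 ≤ t → deriv Q t = Λ + ϱ * T t - σ * Q t - μ₁ * Q t)
    (hT' : ∀ t, 0 ≤ t → deriv T t = σ * Q t - β * T t * V t - ϱ * T t - μ₂ * T t)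
    (hI' : ∀ t, 0 ≤ t → deriv I t = β * T t * V t - μ₃ * I t - p * I t * Z t)
    (hV' : ∀ t, 0 ≤ t → deriv V t = ξ * I t - μ₄ * V t)
    (hZ' : ∀ t, 0 ≤ t → deriv Z t = b + c * I t * Z t / (κ + I t) - μ₅ * Z t)
    (hQ0 : 0 ≤ Q 0) (hT0 : 0 ≤ T 0) (hI0 : 0 ≤ I 0) (hV0 : 0 ≤ V 0) (hZ0 : 0 ≤ Z 0) :
    ∀ t, 0 ≤ t → 0 ≤ Q t ∧ 0 ≤ T t ∧ 0 ≤ I t ∧ 0 ≤ V t ∧ 0 ≤ Z t := by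
  intro t ht
  set x : Fin 5 → ℝ → ℝ := ![Q, T, I, V, Z]
  have hx : ∀ i, Differentiable ℝ (x i) := by
    intro i; fin_cases i <;> assumption
  have hx0 : ∀ i, 0 ≤ x i 0 := by
    intro i; fin_cases i <;> assumption
  have hode : ∀ s, 0 ≤ s → ∀ i,
      deriv (x i) s = hivField Λ ϱ σ β p ξ b c κ μ₁ μ₂ μ₃ μ₄ μ₅ (fun j ↦ x j s) i := by
    intro s hs i
    fin_cases i <;> simp [x, hivField, hQ' s hs, hT' s hs, hI' s hs, hV' s hs, hZ' s hs]
  obtain ⟨M, hM⟩ := isCompact_Icc.exists_bound_of_continuousOn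
    (continuous_pi fun j ↦ (hx j).continuous).continuousOn (s := Icc 0 t)
  have hM0 : 0 ≤ M := (norm_nonneg _).trans (hM 0 ⟨le_rfl, ht⟩)
  have key := nonneg_of_deriv_ge_neg_mul_of_eq_neg (K := ϱ + σ + ξ + c + (β + p) * M)
    hx hx0 ht (by positivity) hκ fun s hs e he hlow i hi ↦ by
      rw [hode s hs.1.le i]
      exact hivField_ge_of_eq_neg hΛ.le hϱ.le hσ.le hβ.le hp.le hξ.le hb.le hc.le hμ₁.le hμ₂.le
        hμ₃.le hμ₄.le hμ₅.le he.1.le he.2 (hM s (Ioc_subset_Icc_self hs)) hlow i hi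
  exact ⟨key 0, key 1, key 2, key 3, key 4⟩
end

section
/- Let Q, T, I, V, Z : ℝ → ℝ be differentiable nonnegative functions satisfying the within-host HIV model for all t ≥ 0, and assume μ₅ > c. Define W(t) = Q(t) + T(t) + I(t) + (μ₃/(2ξ))·V(t) + Z(t) and m = min{μ₁, μ₂, μ₃/2, μ₄, μ₅ − c}. Then for all t ≥ 0, W(t) ≤ e^{−m t}·(W(0) − (Λ + b)/m) + (Λ + b)/m. -/
/-!
Along solutions, the weighted total `W = Q + T + I + (μ₃/(2ξ))·V + Z` satisfies the linear
differential inequality `W' ≤ (Λ + b) - m W`: the exchange terms `ϱT`, `σQ`, `βTV` cancel, the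
weight `μ₃/(2ξ)` makes the viral production `ξI` cost only half of the death rate `μ₃I`, the
saturating immune response `cIZ/(κ+I)` is at most `cZ`, and `pIZ ≥ 0` is dropped. Grönwall's
inequality then compares `W` with the solution of `y' = (Λ + b) - m y`.
-/

open Real Set

theorem le_exp_neg_mul_of_hasDerivAt_le {f f' : ℝ → ℝ} {A m : ℝ} (hm : m ≠ 0)
    (hf : ∀ t, 0 ≤ t → HasDerivAt f (f' t) t) (hf' : ∀ t, 0 ≤ t → f' t ≤ A - m * f t) :
    ∀ t, 0 ≤ t → f t ≤ exp (-m * t) * (f 0 - A / m) + A / m := by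
  intro t ht
  have hcont : ContinuousOn f (Icc 0 t) := fun x hx => (hf x hx.1).continuousAt.continuousWithinAt
  have hgronwall := le_gronwallBound_of_liminf_deriv_right_le (f' := f') (δ := f 0) (K := -m)
    (ε := A) hcont (fun x hx r hr => (hf x hx.1).hasDerivWithinAt.liminf_right_slope_le hr)
    le_rfl (fun x hx => by linarith [hf' x hx.1]) t ⟨ht, le_rfl⟩
  rw [gronwallBound_of_K_ne_0 (neg_ne_zero.2 hm), sub_zero] at hgronwall
  calc f t ≤ f 0 * exp (-m * t) + A / -m * (exp (-m * t) - 1) := hgronwall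
    _ = exp (-m * t) * (f 0 - A / m) + A / m := by rw [div_neg]; ring

theorem hiv_weighted_total_rate_le {Λ ϱ σ β p ξ b c κ μ₁ μ₂ μ₃ μ₄ μ₅ m q τ i v z : ℝ}
    (hp : 0 ≤ p) (hξ : 0 < ξ) (hc : 0 ≤ c) (hκ : 0 ≤ κ) (hμ₃ : 0 ≤ μ₃)
    (hm₁ : m ≤ μ₁) (hm₂ : m ≤ μ₂) (hm₃ : m ≤ μ₃ / 2) (hm₄ : m ≤ μ₄) (hm₅ : m ≤ μ₅ - c)
    (hq : 0 ≤ q) (hτ : 0 ≤ τ) (hi : 0 ≤ i) (hv : 0 ≤ v) (hz : 0 ≤ z) :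
    (Λ + ϱ * τ - σ * q - μ₁ * q) + (σ * q - β * τ * v - ϱ * τ - μ₂ * τ)
        + (β * τ * v - μ₃ * i - p * i * z) + μ₃ / (2 * ξ) * (ξ * i - μ₄ * v)
        + (b + c * i * z / (κ + i) - μ₅ * z)
      ≤ Λ + b - m * (q + τ + i + μ₃ / (2 * ξ) * v + z) := by
  have hsaturation : c * i * z / (κ + i) ≤ c * z :=
    div_le_of_le_mul₀ (by positivity) (by positivity) (by nlinarith [mul_nonneg hc hz])
  have hweight : μ₃ / (2 * ξ) * ξ = μ₃ / 2 := by field_simp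
  have hv' : 0 ≤ μ₃ / (2 * ξ) * v := by positivity
  nlinarith [mul_le_mul_of_nonneg_right hm₁ hq, mul_le_mul_of_nonneg_right hm₂ hτ,
    mul_le_mul_of_nonneg_right hm₃ hi, mul_le_mul_of_nonneg_right hm₄ hv',
    mul_le_mul_of_nonneg_right hm₅ hz, mul_nonneg (mul_nonneg hp hi) hz]
theorem hiv_model_bounded_general
    (Λ ϱ σ β p ξ b c κ μ₁ μ₂ μ₃ μ₄ μ₅ : ℝ)
    (hp : 0 < p)
    (hξ : 0 < ξ) (hc : 0 < c) (hκ : 0 < κ)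
    (hμ₁ : 0 < μ₁) (hμ₂ : 0 < μ₂) (hμ₃ : 0 < μ₃) (hμ₄ : 0 < μ₄)
    (hμ₅c : μ₅ > c)
    (Q T I V Z : ℝ → ℝ)
    (hQ : Differentiable ℝ Q) (hT : Differentiable ℝ T) (hI : Differentiable ℝ I)
    (hV : Differentiable ℝ V) (hZ : Differentiable ℝ Z)
    (hQpos : ∀ t, 0 ≤ t → 0 ≤ Q t) (hTpos : ∀ t, 0 ≤ t → 0 ≤ T t)
    (hIpos : ∀ t, 0 ≤ t → 0 ≤ I t) (hVpos : ∀ t, 0 ≤ t → 0 ≤ V t)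
    (hZpos : ∀ t, 0 ≤ t → 0 ≤ Z t)
    (hQ' : ∀ t, 0 ≤ t → deriv Q t = Λ + ϱ * T t - σ * Q t - μ₁ * Q t)
    (hT' : ∀ t, 0 ≤ t → deriv T t = σ * Q t - β * T t * V t - ϱ * T t - μ₂ * T t)
    (hI' : ∀ t, 0 ≤ t → deriv I t = β * T t * V t - μ₃ * I t - p * I t * Z t)
    (hV' : ∀ t, 0 ≤ t → deriv V t = ξ * I t - μ₄ * V t)
    (hZ' : ∀ t, 0 ≤ t → deriv Z t = b + c * I t * Z t / (κ + I t) - μ₅ * Z t)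
    (W : ℝ → ℝ)
    (hW : ∀ t, W t = Q t + T t + I t + (μ₃ / (2 * ξ)) * V t + Z t)
    (m : ℝ)
    (hm : m = min μ₁ (min μ₂ (min (μ₃ / 2) (min μ₄ (μ₅ - c))))) :
    ∀ t, 0 ≤ t →
      W t ≤ Real.exp (-m * t) * (W 0 - (Λ + b) / m) + (Λ + b) / m := by
  have hm_pos : 0 < m := by
    rw [hm]
    exact lt_min hμ₁ (lt_min hμ₂ (lt_min (by positivity) (lt_min hμ₄ (sub_pos.2 hμ₅c))))
  obtain ⟨hm₁, hm₂, hm₃, hm₄, hm₅⟩ : m ≤ μ₁ ∧ m ≤ μ₂ ∧ m ≤ μ₃ / 2 ∧ m ≤ μ₄ ∧ m ≤ μ₅ - c := by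
    simp only [hm, min_le_iff, le_refl, true_or, or_true, and_self]
  have hW_deriv : ∀ t, HasDerivAt W
      (deriv Q t + deriv T t + deriv I t + μ₃ / (2 * ξ) * deriv V t + deriv Z t) t := by
    intro t
    rw [show W = _ from funext hW]
    exact (((hQ t).hasDerivAt.add (hT t).hasDerivAt).add (hI t).hasDerivAt).add
      ((hV t).hasDerivAt.const_mul _) |>.add (hZ t).hasDerivAt
  refine le_exp_neg_mul_of_hasDerivAt_le hm_pos.ne' (fun t _ => hW_deriv t) fun t ht => ?_
  rw [hQ' t ht, hT' t ht, hI' t ht, hV' t ht, hZ' t ht, hW t]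
  exact hiv_weighted_total_rate_le hp.le hξ hc.le hκ.le hμ₃.le hm₁ hm₂ hm₃ hm₄ hm₅
    (hQpos t ht) (hTpos t ht) (hIpos t ht) (hVpos t ht) (hZpos t ht)

/-- Boundedness of solutions of the within-host HIV model: assuming `μ₅ > c`, the
weighted total population `W = Q + T + I + (μ₃/(2ξ))·V + Z` satisfies
`W t ≤ e^{-m t}(W 0 - (Λ + b)/m) + (Λ + b)/m` with
`m = min{μ₁, μ₂, μ₃/2, μ₄, μ₅ - c}`. -/
theorem hiv_model_bounded
    (Λ ϱ σ β p ξ b c κ μ₁ μ₂ μ₃ μ₄ μ₅ : ℝ)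
    (hΛ : 0 < Λ) (hϱ : 0 < ϱ) (hσ : 0 < σ) (hβ : 0 < β) (hp : 0 < p)
    (hξ : 0 < ξ) (hb : 0 < b) (hc : 0 < c) (hκ : 0 < κ)
    (hμ₁ : 0 < μ₁) (hμ₂ : 0 < μ₂) (hμ₃ : 0 < μ₃) (hμ₄ : 0 < μ₄) (hμ₅ : 0 < μ₅)
    (hμ₅c : μ₅ > c)
    (Q T I V Z : ℝ → ℝ)
    (hQ : Differentiable ℝ Q) (hT : Differentiable ℝ T) (hI : Differentiable ℝ I)
    (hV : Differentiable ℝ V) (hZ : Differentiable ℝ Z)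
    (hQpos : ∀ t, 0 ≤ t → 0 ≤ Q t) (hTpos : ∀ t, 0 ≤ t → 0 ≤ T t)
    (hIpos : ∀ t, 0 ≤ t → 0 ≤ I t) (hVpos : ∀ t, 0 ≤ t → 0 ≤ V t)
    (hZpos : ∀ t, 0 ≤ t → 0 ≤ Z t)
    (hQ' : ∀ t, 0 ≤ t → deriv Q t = Λ + ϱ * T t - σ * Q t - μ₁ * Q t)
    (hT' : ∀ t, 0 ≤ t → deriv T t = σ * Q t - β * T t * V t - ϱ * T t - μ₂ * T t)
    (hI' : ∀ t, 0 ≤ t → deriv I t = β * T t * V t - μ₃ * I t - p * I t * Z t)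
    (hV' : ∀ t, 0 ≤ t → deriv V t = ξ * I t - μ₄ * V t)
    (hZ' : ∀ t, 0 ≤ t → deriv Z t = b + c * I t * Z t / (κ + I t) - μ₅ * Z t)
    (W : ℝ → ℝ)
    (hW : ∀ t, W t = Q t + T t + I t + (μ₃ / (2 * ξ)) * V t + Z t)
    (m : ℝ)
    (hm : m = min μ₁ (min μ₂ (min (μ₃ / 2) (min μ₄ (μ₅ - c))))) :
    ∀ t, 0 ≤ t →
      W t ≤ Real.exp (-m * t) * (W 0 - (Λ + b) / m) + (Λ + b) / m :=
  hiv_model_bounded_general Λ ϱ σ β p ξ b c κ μ₁ μ₂ μ₃ μ₄ μ₅ hp hξ hc hκ hμ₁ hμ₂ hμ₃ hμ₄ hμ₅c Q T I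
    V Z hQ hT hI hV hZ hQpos hTpos hIpos hVpos hZpos hQ' hT' hI' hV' hZ' W hW m hm
end

section
/- For positive reals Λ, β, σ, ξ, b, p, ϱ, μ₁, μ₂, μ₃, μ₄, μ₅, setting R₀ = βΛμ₅σξ / (μ₄(bp + μ₃μ₅)(μ₁(μ₂+ϱ) + μ₂σ)), the identity (bp + μ₅(μ₃ + μ₄))² − (4βΛμ₅²σξ + (μ₁(μ₂+ϱ)+μ₂σ)(bp + μ₅(μ₃ − μ₄))²)/(μ₁(μ₂+ϱ)+μ₂σ) = 4μ₄μ₅(1 − R₀)(bp + μ₃μ₅) holds. In particular this quantity is positive if and only if R₀ < 1. -/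
/-! With `a = bp + μ₃μ₅` and `c = μ₄μ₅` the two squares are `(a + c)²` and `(a - c)²`, whose
difference is `4ac`, while the remaining term `4βΛμ₅²σξ / D` is exactly `4ac·R₀`. -/

theorem add_sq_sub_div_eq_mul_one_sub {K : Type*} [Field K] {a c D T r : K} (hD : D ≠ 0)
    (hT : T = 4 * a * c * D * r) :
    (a + c) ^ 2 - (T + D * (a - c) ^ 2) / D = 4 * a * c * (1 - r) := by
  subst hT
  field_simp
  ring

theorem hiv_eigenvalue_identity_two_general
    (Λ β σ ξ b p ϱ μ₁ μ₂ μ₃ μ₄ μ₅ : ℝ)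
    (hσ : 0 < σ) (hb : 0 < b) (hp : 0 < p)
    (hϱ : 0 < ϱ) (hμ₁ : 0 < μ₁) (hμ₂ : 0 < μ₂) (hμ₃ : 0 < μ₃) (hμ₄ : 0 < μ₄)
    (hμ₅ : 0 < μ₅)
    (R₀ : ℝ)
    (hR₀ : R₀ = β * Λ * μ₅ * σ * ξ /
      (μ₄ * (b * p + μ₃ * μ₅) * (μ₁ * (μ₂ + ϱ) + μ₂ * σ))) :
    (b * p + μ₅ * (μ₃ + μ₄)) ^ 2 -
        (4 * β * Λ * μ₅ ^ 2 * σ * ξ +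
            (μ₁ * (μ₂ + ϱ) + μ₂ * σ) * (b * p + μ₅ * (μ₃ - μ₄)) ^ 2) /
          (μ₁ * (μ₂ + ϱ) + μ₂ * σ) =
      4 * μ₄ * μ₅ * (1 - R₀) * (b * p + μ₃ * μ₅) ∧
    (0 < (b * p + μ₅ * (μ₃ + μ₄)) ^ 2 -
        (4 * β * Λ * μ₅ ^ 2 * σ * ξ +
            (μ₁ * (μ₂ + ϱ) + μ₂ * σ) * (b * p + μ₅ * (μ₃ - μ₄)) ^ 2) /
          (μ₁ * (μ₂ + ϱ) + μ₂ * σ) ↔ R₀ < 1) := by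
  set D := μ₁ * (μ₂ + ϱ) + μ₂ * σ
  set a := b * p + μ₃ * μ₅
  have hD : 0 < D := by positivity
  have ha : 0 < a := by positivity
  have hT : 4 * β * Λ * μ₅ ^ 2 * σ * ξ = 4 * a * (μ₄ * μ₅) * D * R₀ := by
    rw [hR₀]
    field_simp
  have key : (b * p + μ₅ * (μ₃ + μ₄)) ^ 2 -
      (4 * β * Λ * μ₅ ^ 2 * σ * ξ + D * (b * p + μ₅ * (μ₃ - μ₄)) ^ 2) / D =
        4 * μ₄ * μ₅ * (1 - R₀) * a := by
    rw [show b * p + μ₅ * (μ₃ + μ₄) = a + μ₄ * μ₅ by ring,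
      show b * p + μ₅ * (μ₃ - μ₄) = a - μ₄ * μ₅ by ring,
      add_sq_sub_div_eq_mul_one_sub hD.ne' hT]
    ring
  refine ⟨key, ?_⟩
  rw [key, show 4 * μ₄ * μ₅ * (1 - R₀) * a = 4 * μ₄ * μ₅ * a * (1 - R₀) by ring,
    mul_pos_iff_of_pos_left (by positivity), sub_pos]

/-- Algebraic identity used in the local stability analysis:
`(bp + μ₅(μ₃+μ₄))² − (4βΛμ₅²σξ + D(bp + μ₅(μ₃−μ₄))²)/D = 4μ₄μ₅(1 − R₀)(bp + μ₃μ₅)`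
where `D = μ₁(μ₂+ϱ)+μ₂σ`; in particular this quantity is positive iff `R₀ < 1`. -/
theorem hiv_eigenvalue_identity_two
    (Λ β σ ξ b p ϱ μ₁ μ₂ μ₃ μ₄ μ₅ : ℝ)
    (hΛ : 0 < Λ) (hβ : 0 < β) (hσ : 0 < σ) (hξ : 0 < ξ) (hb : 0 < b) (hp : 0 < p)
    (hϱ : 0 < ϱ) (hμ₁ : 0 < μ₁) (hμ₂ : 0 < μ₂) (hμ₃ : 0 < μ₃) (hμ₄ : 0 < μ₄)
    (hμ₅ : 0 < μ₅)
    (R₀ : ℝ)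
    (hR₀ : R₀ = β * Λ * μ₅ * σ * ξ /
      (μ₄ * (b * p + μ₃ * μ₅) * (μ₁ * (μ₂ + ϱ) + μ₂ * σ))) :
    (b * p + μ₅ * (μ₃ + μ₄)) ^ 2 -
        (4 * β * Λ * μ₅ ^ 2 * σ * ξ +
            (μ₁ * (μ₂ + ϱ) + μ₂ * σ) * (b * p + μ₅ * (μ₃ - μ₄)) ^ 2) /
          (μ₁ * (μ₂ + ϱ) + μ₂ * σ) =
      4 * μ₄ * μ₅ * (1 - R₀) * (b * p + μ₃ * μ₅) ∧
    (0 < (b * p + μ₅ * (μ₃ + μ₄)) ^ 2 -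
        (4 * β * Λ * μ₅ ^ 2 * σ * ξ +
            (μ₁ * (μ₂ + ϱ) + μ₂ * σ) * (b * p + μ₅ * (μ₃ - μ₄)) ^ 2) /
          (μ₁ * (μ₂ + ϱ) + μ₂ * σ) ↔ R₀ < 1) :=
  hiv_eigenvalue_identity_two_general Λ β σ ξ b p ϱ μ₁ μ₂ μ₃ μ₄ μ₅ hσ hb hp hϱ hμ₁ hμ₂ hμ₃ hμ₄ hμ₅
    R₀ hR₀
end

section
/- Let J be the 5×5 real matrix with rows (−μ₁−σ, ϱ, 0, 0, 0), (σ, −μ₂−ϱ, 0, −βΛσ/(μ₁(μ₂+ϱ)+μ₂σ), 0), (0, 0, −bp/μ₅−μ₃, βΛσ/(μ₁(μ₂+ϱ)+μ₂σ), 0), (0, 0, ξ, −μ₄, 0), (0, 0, bc/(κμ₅), 0, −μ₅). Then the characteristic polynomial of J factors as (λ − λ₁)(λ − λ₂)(λ − λ₃)(λ − λ₄)(λ − λ₅), where λ₁ = −μ₅, λ₂,₃ = ½(∓√(2σ(μ₁−μ₂+ϱ)+(−μ₁+μ₂+ϱ)²+σ²) − μ₁ − μ₂ − σ − ϱ), and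 λ₄,₅ = −(±√(4βΛμ₅²σξ + (μ₁(μ₂+ϱ)+μ₂σ)(bp+μ₅(μ₃−μ₄))²)/√(μ₁(μ₂+ϱ)+μ₂σ) + bp + μ₅(μ₃+μ₄))/(2μ₅). -/
/-!
At the infection-free equilibrium `I = V = 0`, so the linearised `(I, V)` equations involve
neither the target cells `(Q, T)` nor the immune response `Z`, and those of `(Q, T)` do not
involve `Z`: the Jacobian is block triangular with blocks `(Q, T)`, `(I, V)` and `Z`. Its
characteristic polynomial is therefore `X + μ₅` times the characteristic polynomials of two
`2 × 2` blocks, and each of these splits over the stated roots by Vieta's formulas, their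
discriminants being nonnegative.
-/

open Polynomial

namespace Matrix

variable {R : Type*} [CommRing R]

theorem charpoly_toSquareBlock_eq_charpoly_submatrix {n k α : Type*} [Fintype n] [DecidableEq n]
    [DecidableEq α] [Fintype k] [DecidableEq k] (M : Matrix n n R) (b : n → α) (a : α)
    {f : k → n} (hf : Function.Injective f) (hrange : ∀ i, i ∈ Set.range f ↔ b i = a) :
    (M.toSquareBlock b a).charpoly = (M.submatrix f f).charpoly := by
  let e : k ≃ {i // b i = a} := (Equiv.ofInjective f hf).trans (Equiv.subtypeEquivRight hrange)
  rw [← charpoly_reindex e.symm]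
  rfl

theorem charpoly_fin_two_eq_mul [Nontrivial R] (M : Matrix (Fin 2) (Fin 2) R) {r₁ r₂ : R}
    (hsum : r₁ + r₂ = M.trace) (hprod : r₁ * r₂ = M.det) :
    M.charpoly = (X - C r₁) * (X - C r₂) := by
  rw [charpoly_fin_two, ← hsum, ← hprod, C_add, C_mul]
  ring

theorem charpoly_eq_of_blockTriangular_fin_five [Nontrivial R] (M : Matrix (Fin 5) (Fin 5) R)
    (hM : M.BlockTriangular ![1, 1, 2, 2, 0]) :
    M.charpoly = (X - C (M 4 4)) * (M.submatrix ![0, 1] ![0, 1]).charpoly *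
      (M.submatrix ![2, 3] ![2, 3]).charpoly := by
  have himage : Finset.univ.image ![(1 : ℕ), 1, 2, 2, 0] = {0, 1, 2} := by decide
  rw [hM.charpoly, himage, Finset.prod_insert (by decide), Finset.prod_insert (by decide),
    Finset.prod_singleton, ← mul_assoc,
    charpoly_toSquareBlock_eq_charpoly_submatrix M _ 0 (f := ![(4 : Fin 5)]) (by decide)
      (by decide),
    charpoly_toSquareBlock_eq_charpoly_submatrix M _ 1 (f := ![(0 : Fin 5), 1]) (by decide)
      (by decide),
    charpoly_toSquareBlock_eq_charpoly_submatrix M _ 2 (f := ![(2 : Fin 5), 3]) (by decide)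
      (by decide),
    charpoly_of_isUpperTriangular _ (by intro i j h; omega)]
  simp

end Matrix

open Matrix

theorem charpoly_target_cell_block (μ₁ μ₂ σ ϱ : ℝ) (hσ : 0 ≤ σ) (hϱ : 0 ≤ ϱ) :
    !![-μ₁ - σ, ϱ; σ, -μ₂ - ϱ].charpoly =
      (X - C ((1 / 2) *
        (-Real.sqrt (2 * σ * (μ₁ - μ₂ + ϱ) + (-μ₁ + μ₂ + ϱ) ^ 2 + σ ^ 2) - μ₁ - μ₂ - σ - ϱ))) *
      (X - C ((1 / 2) *
        (Real.sqrt (2 * σ * (μ₁ - μ₂ + ϱ) + (-μ₁ + μ₂ + ϱ) ^ 2 + σ ^ 2) - μ₁ - μ₂ - σ - ϱ))) := by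
  have hdisc : 2 * σ * (μ₁ - μ₂ + ϱ) + (-μ₁ + μ₂ + ϱ) ^ 2 + σ ^ 2 =
      (μ₂ + ϱ - μ₁ - σ) ^ 2 + 4 * σ * ϱ := by ring
  have hsq := Real.sq_sqrt (show 0 ≤ 2 * σ * (μ₁ - μ₂ + ϱ) + (-μ₁ + μ₂ + ϱ) ^ 2 + σ ^ 2 by
    rw [hdisc]; positivity)
  apply charpoly_fin_two_eq_mul
  · rw [trace_fin_two_of]; ring
  · rw [det_fin_two_of]; linear_combination (-1 / 4 : ℝ) * hsq

theorem charpoly_infection_block (β Λ σ ξ b p μ₃ μ₄ μ₅ d : ℝ) (hμ₅ : μ₅ ≠ 0) (hd : 0 < d)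
    (hdisc : 0 ≤ 4 * β * Λ * μ₅ ^ 2 * σ * ξ + d * (b * p + μ₅ * (μ₃ - μ₄)) ^ 2) :
    !![-(b * p / μ₅) - μ₃, β * Λ * σ / d; ξ, -μ₄].charpoly =
      (X - C (-((Real.sqrt (4 * β * Λ * μ₅ ^ 2 * σ * ξ + d * (b * p + μ₅ * (μ₃ - μ₄)) ^ 2) /
          Real.sqrt d + b * p + μ₅ * (μ₃ + μ₄)) / (2 * μ₅)))) *
      (X - C (-((-(Real.sqrt (4 * β * Λ * μ₅ ^ 2 * σ * ξ + d * (b * p + μ₅ * (μ₃ - μ₄)) ^ 2) /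
          Real.sqrt d) + b * p + μ₅ * (μ₃ + μ₄)) / (2 * μ₅)))) := by
  have hsq := Real.sq_sqrt hdisc
  have hsq_d := Real.sq_sqrt hd.le
  have hr : Real.sqrt d ≠ 0 := (Real.sqrt_pos.2 hd).ne'
  generalize Real.sqrt (4 * β * Λ * μ₅ ^ 2 * σ * ξ + d * (b * p + μ₅ * (μ₃ - μ₄)) ^ 2) = s
    at hsq ⊢
  generalize Real.sqrt d = r at hsq_d hr ⊢
  subst hsq_d
  apply charpoly_fin_two_eq_mul
  · rw [trace_fin_two_of]; field_simp; ring
  · rw [det_fin_two_of]; field_simp; linear_combination -hsq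

theorem hiv_jacobian_charpoly_factorization_general
    (Λ β σ ξ b p c κ ϱ μ₁ μ₂ μ₃ μ₄ μ₅ : ℝ)
    (hΛ : 0 < Λ) (hβ : 0 < β) (hσ : 0 < σ) (hξ : 0 < ξ) (hϱ : 0 < ϱ)
    (hμ₁ : 0 < μ₁) (hμ₂ : 0 < μ₂) (hμ₅ : 0 < μ₅)
    (J : Matrix (Fin 5) (Fin 5) ℝ)
    (hJ : J = !![-μ₁ - σ, ϱ, 0, 0, 0;
                 σ, -μ₂ - ϱ, 0, -(β * Λ * σ / (μ₁ * (μ₂ + ϱ) + μ₂ * σ)), 0;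
                 0, 0, -(b * p / μ₅) - μ₃, β * Λ * σ / (μ₁ * (μ₂ + ϱ) + μ₂ * σ), 0;
                 0, 0, ξ, -μ₄, 0;
                 0, 0, b * c / (κ * μ₅), 0, -μ₅])
    (lam₁ lam₂ lam₃ lam₄ lam₅ : ℝ)
    (h₁ : lam₁ = -μ₅)
    (h₂ : lam₂ = (1 / 2) *
      (-Real.sqrt (2 * σ * (μ₁ - μ₂ + ϱ) + (-μ₁ + μ₂ + ϱ) ^ 2 + σ ^ 2)
        - μ₁ - μ₂ - σ - ϱ))
    (h₃ : lam₃ = (1 / 2) *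
      (Real.sqrt (2 * σ * (μ₁ - μ₂ + ϱ) + (-μ₁ + μ₂ + ϱ) ^ 2 + σ ^ 2)
        - μ₁ - μ₂ - σ - ϱ))
    (h₄ : lam₄ = -((Real.sqrt (4 * β * Λ * μ₅ ^ 2 * σ * ξ +
          (μ₁ * (μ₂ + ϱ) + μ₂ * σ) * (b * p + μ₅ * (μ₃ - μ₄)) ^ 2) /
            Real.sqrt (μ₁ * (μ₂ + ϱ) + μ₂ * σ) +
          b * p + μ₅ * (μ₃ + μ₄)) / (2 * μ₅)))
    (h₅ : lam₅ = -((-(Real.sqrt (4 * β * Λ * μ₅ ^ 2 * σ * ξ +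
          (μ₁ * (μ₂ + ϱ) + μ₂ * σ) * (b * p + μ₅ * (μ₃ - μ₄)) ^ 2) /
            Real.sqrt (μ₁ * (μ₂ + ϱ) + μ₂ * σ)) +
          b * p + μ₅ * (μ₃ + μ₄)) / (2 * μ₅))) :
    J.charpoly = (X - C lam₁) * (X - C lam₂) * (X - C lam₃) * (X - C lam₄) * (X - C lam₅) := by
  have hd : 0 < μ₁ * (μ₂ + ϱ) + μ₂ * σ := by positivity
  have hJ_tri : J.BlockTriangular ![1, 1, 2, 2, 0] := by
    intro i j hij
    subst hJ
    fin_cases i <;> fin_cases j <;> simp at hij ⊢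
  have hJ_QT : J.submatrix ![0, 1] ![0, 1] = !![-μ₁ - σ, ϱ; σ, -μ₂ - ϱ] := by
    subst hJ; ext i j; fin_cases i <;> fin_cases j <;> rfl
  have hJ_IV : J.submatrix ![2, 3] ![2, 3] =
      !![-(b * p / μ₅) - μ₃, β * Λ * σ / (μ₁ * (μ₂ + ϱ) + μ₂ * σ); ξ, -μ₄] := by
    subst hJ; ext i j; fin_cases i <;> fin_cases j <;> rfl
  have hJ_Z : J 4 4 = -μ₅ := by simp [hJ]
  rw [charpoly_eq_of_blockTriangular_fin_five J hJ_tri, hJ_QT, hJ_IV, hJ_Z,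
    charpoly_target_cell_block μ₁ μ₂ σ ϱ hσ.le hϱ.le,
    charpoly_infection_block β Λ σ ξ b p μ₃ μ₄ μ₅ _ hμ₅.ne' hd (by positivity), h₁, h₂, h₃, h₄, h₅]
  ring

/-- The characteristic polynomial of the Jacobian of the within-host HIV model at the
infection-free equilibrium factors into linear factors with the five explicit
eigenvalues `λ₁, …, λ₅`. -/
theorem hiv_jacobian_charpoly_factorization
    (Λ β σ ξ b p c κ ϱ μ₁ μ₂ μ₃ μ₄ μ₅ : ℝ)
    (hΛ : 0 < Λ) (hβ : 0 < β) (hσ : 0 < σ) (hξ : 0 < ξ) (hb : 0 < b) (hp : 0 < p)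
    (hc : 0 < c) (hκ : 0 < κ) (hϱ : 0 < ϱ) (hμ₁ : 0 < μ₁) (hμ₂ : 0 < μ₂)
    (hμ₃ : 0 < μ₃) (hμ₄ : 0 < μ₄) (hμ₅ : 0 < μ₅)
    (J : Matrix (Fin 5) (Fin 5) ℝ)
    (hJ : J = !![-μ₁ - σ, ϱ, 0, 0, 0;
                 σ, -μ₂ - ϱ, 0, -(β * Λ * σ / (μ₁ * (μ₂ + ϱ) + μ₂ * σ)), 0;
                 0, 0, -(b * p / μ₅) - μ₃, β * Λ * σ / (μ₁ * (μ₂ + ϱ) + μ₂ * σ), 0;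
                 0, 0, ξ, -μ₄, 0;
                 0, 0, b * c / (κ * μ₅), 0, -μ₅])
    (lam₁ lam₂ lam₃ lam₄ lam₅ : ℝ)
    (h₁ : lam₁ = -μ₅)
    (h₂ : lam₂ = (1 / 2) *
      (-Real.sqrt (2 * σ * (μ₁ - μ₂ + ϱ) + (-μ₁ + μ₂ + ϱ) ^ 2 + σ ^ 2)
        - μ₁ - μ₂ - σ - ϱ))
    (h₃ : lam₃ = (1 / 2) *
      (Real.sqrt (2 * σ * (μ₁ - μ₂ + ϱ) + (-μ₁ + μ₂ + ϱ) ^ 2 + σ ^ 2)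
        - μ₁ - μ₂ - σ - ϱ))
    (h₄ : lam₄ = -((Real.sqrt (4 * β * Λ * μ₅ ^ 2 * σ * ξ +
          (μ₁ * (μ₂ + ϱ) + μ₂ * σ) * (b * p + μ₅ * (μ₃ - μ₄)) ^ 2) /
            Real.sqrt (μ₁ * (μ₂ + ϱ) + μ₂ * σ) +
          b * p + μ₅ * (μ₃ + μ₄)) / (2 * μ₅)))
    (h₅ : lam₅ = -((-(Real.sqrt (4 * β * Λ * μ₅ ^ 2 * σ * ξ +
          (μ₁ * (μ₂ + ϱ) + μ₂ * σ) * (b * p + μ₅ * (μ₃ - μ₄)) ^ 2) /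
            Real.sqrt (μ₁ * (μ₂ + ϱ) + μ₂ * σ)) +
          b * p + μ₅ * (μ₃ + μ₄)) / (2 * μ₅))) :
    J.charpoly = (X - C lam₁) * (X - C lam₂) * (X - C lam₃) * (X - C lam₄) * (X - C lam₅) :=
  hiv_jacobian_charpoly_factorization_general Λ β σ ξ b p c κ ϱ μ₁ μ₂ μ₃ μ₄ μ₅ hΛ hβ hσ hξ hϱ hμ₁
    hμ₂ hμ₅ J hJ lam₁ lam₂ lam₃ lam₄ lam₅ h₁ h₂ h₃ h₄ h₅
end

section
/- Let J be the 5×5 real matrix with rows (−μ₁−σ, ϱ, 0, 0, 0), (σ, −μ₂−ϱ, 0, −βΛσ/(μ₁(μ₂+ϱ)+μ₂σ), 0), (0, 0, −bp/μ₅−μ₃, βΛσ/(μ₁(μ₂+ϱ)+μ₂σ), 0), (0, 0, ξ, −μ₄, 0), (0, 0, bc/(κμ₅), 0, −μ₅). If R₀ < 1, then every complex eigenvalue of J has negative real part; i.e., the infection-free equilibrium is locally asymptotically stable. -/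
/-!
The Jacobian is block triangular after reordering the coordinates as `(Z | Q, T | I, V)`, so its
characteristic polynomial factors as `(z + μ₅)` times the characteristic polynomials of the
`(Q, T)` and `(I, V)` blocks. A real `2 × 2` block with negative trace and positive determinant
has only eigenvalues with negative real part. Both blocks have negative trace; the `(Q, T)` block
has determinant `μ₁ (μ₂ + ϱ) + μ₂ σ > 0`, and the `(I, V)` block has positive determinant exactly
when `R₀ < 1`.
-/

open Matrix Polynomial

theorem det_fin_five_of_sparse {R : Type*} [CommRing R] (a b c d e f g h i j k : R) :
    !![a, b, 0, 0, 0; c, d, 0, e, 0; 0, 0, f, g, 0; 0, 0, h, i, 0; 0, 0, j, 0, k].det =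
      (a * d - b * c) * (f * i - g * h) * k := by
  eval_det
  ring

theorem eval_charpoly_map_fin_five_of_sparse {R A : Type*} [Zero R] [CommRing A] (φ : R → A)
    (hφ : φ 0 = 0) (a b c d e f g h i j k : R) (t : A) :
    ((!![a, b, 0, 0, 0; c, d, 0, e, 0; 0, 0, f, g, 0; 0, 0, h, i, 0; 0, 0, j, 0, k]).map
        φ).charpoly.eval t =
      ((t - φ a) * (t - φ d) - φ b * φ c) * ((t - φ f) * (t - φ i) - φ g * φ h) *
        (t - φ k) := by
  have hsub : scalar (Fin 5) t -
      (!![a, b, 0, 0, 0; c, d, 0, e, 0; 0, 0, f, g, 0; 0, 0, h, i, 0; 0, 0, j, 0, k]).map φ =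
      !![t - φ a, -φ b, 0, 0, 0; -φ c, t - φ d, 0, -φ e, 0; 0, 0, t - φ f, -φ g, 0;
        0, 0, -φ h, t - φ i, 0; 0, 0, -φ j, 0, t - φ k] := by
    ext r s
    fin_cases r <;> fin_cases s <;> simp [hφ]
  rw [eval_charpoly, hsub, det_fin_five_of_sparse]
  ring

theorem Complex.re_neg_of_sq_add_mul_add_eq_zero {B C : ℝ} (hB : 0 < B) (hC : 0 < C) {z : ℂ}
    (h : z ^ 2 + B * z + C = 0) : z.re < 0 := by
  have hre : z.re ^ 2 - z.im ^ 2 + B * z.re + C = 0 := by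
    simpa [sq] using congrArg Complex.re h
  have him : z.im * (2 * z.re + B) = 0 := by
    have him' := congrArg Complex.im h
    simp only [sq, Complex.add_im, Complex.mul_im, Complex.ofReal_re, Complex.ofReal_im,
      Complex.zero_im] at him'
    linear_combination him'
  rcases mul_eq_zero.mp him with hreal | hcenter
  · -- a real root of a quadratic with positive coefficients is negative
    rw [hreal] at hre
    nlinarith
  · linarith

theorem Complex.re_neg_of_add_mul_add_sub_eq_zero {a d q : ℝ} (ha : 0 < a) (hd : 0 < d)
    (hq : q < a * d) {z : ℂ} (h : (z + a) * (z + d) - q = 0) : z.re < 0 :=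
  Complex.re_neg_of_sq_add_mul_add_eq_zero (B := a + d) (C := a * d - q) (by linarith)
    (by linarith) (by push_cast; linear_combination h)

theorem mul_lt_of_basic_reproduction_number_lt_one {β Λ σ ξ b p μ₃ μ₄ μ₅ D : ℝ}
    (hD : 0 < D) (hb : 0 < b) (hp : 0 < p) (hμ₃ : 0 < μ₃) (hμ₄ : 0 < μ₄) (hμ₅ : 0 < μ₅)
    (hR₀ : β * Λ * μ₅ * σ * ξ / (μ₄ * (b * p + μ₃ * μ₅) * D) < 1) :
    β * Λ * σ / D * ξ < (b * p / μ₅ + μ₃) * μ₄ := by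
  rw [div_lt_one (by positivity)] at hR₀
  calc β * Λ * σ / D * ξ = β * Λ * μ₅ * σ * ξ / (μ₅ * D) := by field_simp
    _ < μ₄ * (b * p + μ₃ * μ₅) * D / (μ₅ * D) := div_lt_div_of_pos_right hR₀ (by positivity)
    _ = (b * p / μ₅ + μ₃) * μ₄ := by field_simp

theorem hiv_infection_free_locally_stable_general
    (Λ β σ ξ b p c κ ϱ μ₁ μ₂ μ₃ μ₄ μ₅ : ℝ)
    (hσ : 0 < σ) (hb : 0 < b) (hp : 0 < p)
    (hϱ : 0 < ϱ) (hμ₁ : 0 < μ₁) (hμ₂ : 0 < μ₂)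
    (hμ₃ : 0 < μ₃) (hμ₄ : 0 < μ₄) (hμ₅ : 0 < μ₅)
    (R₀ : ℝ)
    (hR₀ : R₀ = β * Λ * μ₅ * σ * ξ /
      (μ₄ * (b * p + μ₃ * μ₅) * (μ₁ * (μ₂ + ϱ) + μ₂ * σ)))
    (hR₀lt : R₀ < 1)
    (J : Matrix (Fin 5) (Fin 5) ℝ)
    (hJ : J = !![-μ₁ - σ, ϱ, 0, 0, 0;
                 σ, -μ₂ - ϱ, 0, -(β * Λ * σ / (μ₁ * (μ₂ + ϱ) + μ₂ * σ)), 0;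
                 0, 0, -(b * p / μ₅) - μ₃, β * Λ * σ / (μ₁ * (μ₂ + ϱ) + μ₂ * σ), 0;
                 0, 0, ξ, -μ₄, 0;
                 0, 0, b * c / (κ * μ₅), 0, -μ₅]) :
    ∀ z : ℂ, (J.map (Complex.ofReal)).charpoly.IsRoot z → z.re < 0 := by
  intro z hz
  have hD : 0 < μ₁ * (μ₂ + ϱ) + μ₂ * σ := by positivity
  rw [hR₀] at hR₀lt
  rw [hJ, IsRoot.def, eval_charpoly_map_fin_five_of_sparse _ Complex.ofReal_zero] at hz
  rcases mul_eq_zero.mp hz with hQTIV | hZ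
  · rcases mul_eq_zero.mp hQTIV with hQT | hIV
    · refine Complex.re_neg_of_add_mul_add_sub_eq_zero (a := μ₁ + σ) (d := μ₂ + ϱ)
        (q := ϱ * σ) (by positivity) (by positivity) (by linarith) ?_
      push_cast at hQT ⊢
      linear_combination hQT
    · refine Complex.re_neg_of_add_mul_add_sub_eq_zero (by positivity) hμ₄
        (mul_lt_of_basic_reproduction_number_lt_one hD hb hp hμ₃ hμ₄ hμ₅ hR₀lt) ?_
      push_cast at hIV ⊢
      linear_combination hIV
  · rw [sub_eq_zero.mp hZ]
    simpa using hμ₅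

/-- Local asymptotic stability of the infection-free equilibrium: if `R₀ < 1`, then
every complex eigenvalue (root of the characteristic polynomial over `ℂ`) of the
Jacobian at the infection-free equilibrium has negative real part. -/
theorem hiv_infection_free_locally_stable
    (Λ β σ ξ b p c κ ϱ μ₁ μ₂ μ₃ μ₄ μ₅ : ℝ)
    (hΛ : 0 < Λ) (hβ : 0 < β) (hσ : 0 < σ) (hξ : 0 < ξ) (hb : 0 < b) (hp : 0 < p)
    (hc : 0 < c) (hκ : 0 < κ) (hϱ : 0 < ϱ) (hμ₁ : 0 < μ₁) (hμ₂ : 0 < μ₂)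
    (hμ₃ : 0 < μ₃) (hμ₄ : 0 < μ₄) (hμ₅ : 0 < μ₅)
    (R₀ : ℝ)
    (hR₀ : R₀ = β * Λ * μ₅ * σ * ξ /
      (μ₄ * (b * p + μ₃ * μ₅) * (μ₁ * (μ₂ + ϱ) + μ₂ * σ)))
    (hR₀lt : R₀ < 1)
    (J : Matrix (Fin 5) (Fin 5) ℝ)
    (hJ : J = !![-μ₁ - σ, ϱ, 0, 0, 0;
                 σ, -μ₂ - ϱ, 0, -(β * Λ * σ / (μ₁ * (μ₂ + ϱ) + μ₂ * σ)), 0;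
                 0, 0, -(b * p / μ₅) - μ₃, β * Λ * σ / (μ₁ * (μ₂ + ϱ) + μ₂ * σ), 0;
                 0, 0, ξ, -μ₄, 0;
                 0, 0, b * c / (κ * μ₅), 0, -μ₅]) :
    ∀ z : ℂ, (J.map (Complex.ofReal)).charpoly.IsRoot z → z.re < 0 :=
  hiv_infection_free_locally_stable_general Λ β σ ξ b p c κ ϱ μ₁ μ₂ μ₃ μ₄ μ₅ hσ hb hp hϱ hμ₁ hμ₂ hμ₃
    hμ₄ hμ₅ R₀ hR₀ hR₀lt J hJ
end

section
/- Suppose (Q*, T*, I*, V*, Z*) is an equilibrium of the within-host HIV model with I* > 0 and μ₅κ + I*(μ₅ − c) ≠ 0. Then A·I*² + B·I* + C = 0, where A = −βξ(μ₁+σ)(bp + μ₃(μ₅−c)), B = −βξ(bκp(μ₁+σ) + Λσ(c−μ₅) + κμ₃μ₅(μ₁+σ)) + μ₄(μ₁(μ₂+ϱ)+μ₂σ)(μ₃(c−μ₅) − bp), and C = βκΛμ₅σξ − κμ₄(bp+μ₃μ₅)(μ₁(μ₂+ϱ)+μ₂σ); moreover C = κμ₄(bp+μ₃μ₅)(μ₁(μ₂+ϱ)+μ₂σ)·(R₀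 − 1). -/
/-!
At an equilibrium with `I ≠ 0`, the infected-cell and virus equations give `βξT = μ₄(μ₃ + pZ)`,
and adding the two uninfected-cell equations eliminates `Q`; together they yield the balance
`(μ₃ + pZ)((μ₁ + σ)βξI + μ₄(μ₁(μ₂ + ϱ) + μ₂σ)) = βξσΛ`. The antibody equation, cleared of its
denominator, reads `Z(μ₅κ + I(μ₅ - c)) = b(κ + I)`, so multiplying the balance by
`μ₅κ + I(μ₅ - c)` eliminates `Z` and leaves a quadratic in `I`.
-/

section Equilibrium

variable {R : Type*} [CommRing R]
  {Λ ϱ σ β p ξ b c κ μ₁ μ₂ μ₃ μ₄ μ₅ Q T I V Z : R}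

theorem target_cells_eq_of_equilibrium [IsDomain R] (hI : I ≠ 0)
    (e3 : β * T * V - μ₃ * I - p * I * Z = 0) (e4 : ξ * I - μ₄ * V = 0) :
    β * ξ * T = μ₄ * (μ₃ + p * Z) :=
  mul_left_cancel₀ hI (by linear_combination μ₄ * e3 + β * T * e4)

theorem infection_balance_of_equilibrium [IsDomain R] (hI : I ≠ 0)
    (e1 : Λ + ϱ * T - σ * Q - μ₁ * Q = 0)
    (e2 : σ * Q - β * T * V - ϱ * T - μ₂ * T = 0)
    (e3 : β * T * V - μ₃ * I - p * I * Z = 0) (e4 : ξ * I - μ₄ * V = 0) :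
    (μ₃ + p * Z) * ((μ₁ + σ) * β * ξ * I + μ₄ * (μ₁ * (μ₂ + ϱ) + μ₂ * σ)) =
      β * ξ * σ * Λ := by
  have hT := target_cells_eq_of_equilibrium hI e3 e4
  linear_combination -(β * ξ) * (σ * e1 + (σ + μ₁) * e2) - (μ₁ + σ) * β * ξ * e3 -
    (μ₁ * (μ₂ + ϱ) + μ₂ * σ) * hT

theorem infected_quadratic_of_infection_balance
    (hbal : (μ₃ + p * Z) * ((μ₁ + σ) * β * ξ * I + μ₄ * (μ₁ * (μ₂ + ϱ) + μ₂ * σ)) =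
      β * ξ * σ * Λ)
    (hZ : Z * (μ₅ * κ + I * (μ₅ - c)) = b * (κ + I)) :
    -(β * ξ) * (μ₁ + σ) * (b * p + μ₃ * (μ₅ - c)) * I ^ 2 +
      (-(β * ξ) * (b * κ * p * (μ₁ + σ) + Λ * σ * (c - μ₅) + κ * μ₃ * μ₅ * (μ₁ + σ)) +
        μ₄ * (μ₁ * (μ₂ + ϱ) + μ₂ * σ) * (μ₃ * (c - μ₅) - b * p)) * I +
      (β * κ * Λ * μ₅ * σ * ξ - κ * μ₄ * (b * p + μ₃ * μ₅) * (μ₁ * (μ₂ + ϱ) + μ₂ * σ)) = 0 := by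
  linear_combination -(μ₅ * κ + I * (μ₅ - c)) * hbal +
    p * ((μ₁ + σ) * β * ξ * I + μ₄ * (μ₁ * (μ₂ + ϱ) + μ₂ * σ)) * hZ

end Equilibrium

theorem antibody_eq_of_equilibrium {K : Type*} [Field K] {b c κ μ₅ I Z : K}
    (hκI : κ + I ≠ 0) (e5 : b + c * I * Z / (κ + I) - μ₅ * Z = 0) :
    Z * (μ₅ * κ + I * (μ₅ - c)) = b * (κ + I) := by
  field_simp at e5
  linear_combination -e5

theorem hiv_infection_equilibrium_quadratic_general
    (Λ ϱ σ β p ξ b c κ μ₁ μ₂ μ₃ μ₄ μ₅ : ℝ)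
    (hϱ : 0 < ϱ) (hσ : 0 < σ) (hp : 0 < p)
    (hb : 0 < b) (hκ : 0 < κ)
    (hμ₁ : 0 < μ₁) (hμ₂ : 0 < μ₂) (hμ₃ : 0 < μ₃) (hμ₄ : 0 < μ₄) (hμ₅ : 0 < μ₅)
    (R₀ : ℝ)
    (hR₀ : R₀ = β * Λ * μ₅ * σ * ξ /
      (μ₄ * (b * p + μ₃ * μ₅) * (μ₁ * (μ₂ + ϱ) + μ₂ * σ)))
    (Q T I V Z : ℝ) (hI : 0 < I)
    (e1 : Λ + ϱ * T - σ * Q - μ₁ * Q = 0)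
    (e2 : σ * Q - β * T * V - ϱ * T - μ₂ * T = 0)
    (e3 : β * T * V - μ₃ * I - p * I * Z = 0)
    (e4 : ξ * I - μ₄ * V = 0)
    (e5 : b + c * I * Z / (κ + I) - μ₅ * Z = 0)
    (A B C : ℝ)
    (hA : A = -(β * ξ) * (μ₁ + σ) * (b * p + μ₃ * (μ₅ - c)))
    (hB : B = -(β * ξ) * (b * κ * p * (μ₁ + σ) + Λ * σ * (c - μ₅) +
          κ * μ₃ * μ₅ * (μ₁ + σ)) +
        μ₄ * (μ₁ * (μ₂ + ϱ) + μ₂ * σ) * (μ₃ * (c - μ₅) - b * p))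
    (hC : C = β * κ * Λ * μ₅ * σ * ξ -
        κ * μ₄ * (b * p + μ₃ * μ₅) * (μ₁ * (μ₂ + ϱ) + μ₂ * σ)) :
    A * I ^ 2 + B * I + C = 0 ∧
    C = κ * μ₄ * (b * p + μ₃ * μ₅) * (μ₁ * (μ₂ + ϱ) + μ₂ * σ) * (R₀ - 1) := by
  subst hA hB hC
  have hbal := infection_balance_of_equilibrium hI.ne' e1 e2 e3 e4
  have hZ := antibody_eq_of_equilibrium (by positivity) e5
  refine ⟨infected_quadratic_of_infection_balance hbal hZ, ?_⟩
  have hden : μ₄ * (b * p + μ₃ * μ₅) * (μ₁ * (μ₂ + ϱ) + μ₂ * σ) ≠ 0 := by positivity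
  rw [hR₀]
  field_simp

/-- The infected-cell coordinate `I*` of any infection equilibrium satisfies the
quadratic equation `A·I*² + B·I* + C = 0` with the explicit coefficients, and
`C = κμ₄(bp+μ₃μ₅)(μ₁(μ₂+ϱ)+μ₂σ)(R₀ − 1)`. -/
theorem hiv_infection_equilibrium_quadratic
    (Λ ϱ σ β p ξ b c κ μ₁ μ₂ μ₃ μ₄ μ₅ : ℝ)
    (hΛ : 0 < Λ) (hϱ : 0 < ϱ) (hσ : 0 < σ) (hβ : 0 < β) (hp : 0 < p)
    (hξ : 0 < ξ) (hb : 0 < b) (hc : 0 < c) (hκ : 0 < κ)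
    (hμ₁ : 0 < μ₁) (hμ₂ : 0 < μ₂) (hμ₃ : 0 < μ₃) (hμ₄ : 0 < μ₄) (hμ₅ : 0 < μ₅)
    (R₀ : ℝ)
    (hR₀ : R₀ = β * Λ * μ₅ * σ * ξ /
      (μ₄ * (b * p + μ₃ * μ₅) * (μ₁ * (μ₂ + ϱ) + μ₂ * σ)))
    (Q T I V Z : ℝ) (hI : 0 < I)
    (hden : μ₅ * κ + I * (μ₅ - c) ≠ 0)
    (e1 : Λ + ϱ * T - σ * Q - μ₁ * Q = 0)
    (e2 : σ * Q - β * T * V - ϱ * T - μ₂ * T = 0)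
    (e3 : β * T * V - μ₃ * I - p * I * Z = 0)
    (e4 : ξ * I - μ₄ * V = 0)
    (e5 : b + c * I * Z / (κ + I) - μ₅ * Z = 0)
    (A B C : ℝ)
    (hA : A = -(β * ξ) * (μ₁ + σ) * (b * p + μ₃ * (μ₅ - c)))
    (hB : B = -(β * ξ) * (b * κ * p * (μ₁ + σ) + Λ * σ * (c - μ₅) +
          κ * μ₃ * μ₅ * (μ₁ + σ)) +
        μ₄ * (μ₁ * (μ₂ + ϱ) + μ₂ * σ) * (μ₃ * (c - μ₅) - b * p))
    (hC : C = β * κ * Λ * μ₅ * σ * ξ -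
        κ * μ₄ * (b * p + μ₃ * μ₅) * (μ₁ * (μ₂ + ϱ) + μ₂ * σ)) :
    A * I ^ 2 + B * I + C = 0 ∧
    C = κ * μ₄ * (b * p + μ₃ * μ₅) * (μ₁ * (μ₂ + ϱ) + μ₂ * σ) * (R₀ - 1) :=
  hiv_infection_equilibrium_quadratic_general Λ ϱ σ β p ξ b c κ μ₁ μ₂ μ₃ μ₄ μ₅ hϱ hσ hp hb hκ hμ₁
    hμ₂ hμ₃ hμ₄ hμ₅ R₀ hR₀ Q T I V Z hI e1 e2 e3 e4 e5 A B C hA hB hC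
end

section
/- Assume μ₅ > c and R₀ > 1. Let A = −βξ(μ₁+σ)(bp + μ₃(μ₅−c)), B = −βξ(bκp(μ₁+σ) + Λσ(c−μ₅) + κμ₃μ₅(μ₁+σ)) + μ₄(μ₁(μ₂+ϱ)+μ₂σ)(μ₃(c−μ₅) − bp), C = κμ₄(bp+μ₃μ₅)(μ₁(μ₂+ϱ)+μ₂σ)·(R₀ − 1). Then B² − 4AC > 0 and the quadratic A·x² + B·x + C has exactly one positive real root, namely x = (−B − √(B² − 4AC))/(2A); its other real root is negative. -/
/-!
Both `A < 0` (because `μ₅ > c`) and `C > 0` (because `R₀ > 1`), so `AC < 0`. Then the discriminant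
exceeds `B²`, i.e. `√Δ > |B|`, and the two roots `(-B ± √Δ)/(2A)` have opposite signs: with `2A < 0`,
the root taking `-√Δ` is the positive one.
-/

theorem discrim_pos_of_mul_neg {R : Type*} [CommRing R] [LinearOrder R] [IsStrictOrderedRing R]
    {a b c : R} (h : a * c < 0) : 0 < discrim a b c := by
  unfold discrim
  nlinarith [sq_nonneg b]

theorem abs_lt_sqrt_discrim_of_mul_neg {a b c : ℝ} (h : a * c < 0) : |b| < √(discrim a b c) :=
  (Real.lt_sqrt (abs_nonneg b)).2 (by rw [sq_abs, discrim]; linarith)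

theorem quadratic_roots_of_neg_of_pos {a b c : ℝ} (ha : a < 0) (hc : 0 < c) :
    (a * ((-b - √(discrim a b c)) / (2 * a)) ^ 2 + b * ((-b - √(discrim a b c)) / (2 * a)) + c = 0 ∧
      0 < (-b - √(discrim a b c)) / (2 * a)) ∧
    ∀ x, a * x ^ 2 + b * x + c = 0 → x = (-b - √(discrim a b c)) / (2 * a) ∨ x < 0 := by
  have hac : a * c < 0 := mul_neg_of_neg_of_pos ha hc
  have hbs : |b| < √(discrim a b c) := abs_lt_sqrt_discrim_of_mul_neg hac
  have hroots := quadratic_eq_zero_iff ha.ne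
    (Real.mul_self_sqrt (discrim_pos_of_mul_neg (b := b) hac).le).symm
  have h2a : 2 * a < 0 := by linarith
  refine ⟨⟨?_, div_pos_of_neg_of_neg (by linarith [neg_le_abs b]) h2a⟩, fun x hx => ?_⟩
  · rw [sq]
    exact (hroots _).2 (Or.inr rfl)
  · rw [sq] at hx
    refine ((hroots x).1 hx).symm.imp id fun h => ?_
    rw [h]
    exact div_neg_of_pos_of_neg (by linarith [le_abs_self b]) h2a

theorem hiv_quadratic_unique_positive_root_general
    (ϱ σ β p ξ b c κ μ₁ μ₂ μ₃ μ₄ μ₅ : ℝ)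
    (hϱ : 0 < ϱ) (hσ : 0 < σ) (hβ : 0 < β) (hp : 0 < p)
    (hξ : 0 < ξ) (hb : 0 < b) (hκ : 0 < κ)
    (hμ₁ : 0 < μ₁) (hμ₂ : 0 < μ₂) (hμ₃ : 0 < μ₃) (hμ₄ : 0 < μ₄) (hμ₅ : 0 < μ₅)
    (hμ₅c : μ₅ > c)
    (R₀ : ℝ)
    (hR₀gt : R₀ > 1)
    (A B C : ℝ)
    (hA : A = -(β * ξ) * (μ₁ + σ) * (b * p + μ₃ * (μ₅ - c)))
    (hC : C = κ * μ₄ * (b * p + μ₃ * μ₅) * (μ₁ * (μ₂ + ϱ) + μ₂ * σ) * (R₀ - 1)) :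
    B ^ 2 - 4 * A * C > 0 ∧
    (A * ((-B - Real.sqrt (B ^ 2 - 4 * A * C)) / (2 * A)) ^ 2 +
        B * ((-B - Real.sqrt (B ^ 2 - 4 * A * C)) / (2 * A)) + C = 0 ∧
      0 < (-B - Real.sqrt (B ^ 2 - 4 * A * C)) / (2 * A)) ∧
    (∀ x : ℝ, A * x ^ 2 + B * x + C = 0 →
      x = (-B - Real.sqrt (B ^ 2 - 4 * A * C)) / (2 * A) ∨ x < 0) := by
  have hA_neg : A < 0 := by
    have : 0 < b * p + μ₃ * (μ₅ - c) := add_pos (by positivity) (mul_pos hμ₃ (sub_pos.2 hμ₅c))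
    rw [hA, neg_mul, neg_mul, neg_lt_zero]
    positivity
  have hC_pos : 0 < C := hC ▸ mul_pos (by positivity) (sub_pos.2 hR₀gt)
  exact ⟨discrim_pos_of_mul_neg (mul_neg_of_neg_of_pos hA_neg hC_pos),
    quadratic_roots_of_neg_of_pos hA_neg hC_pos⟩

/-- If `μ₅ > c` and `R₀ > 1`, then the equilibrium quadratic `A x² + B x + C` has
positive discriminant and exactly one positive real root, namely
`(−B − √(B²−4AC))/(2A)`; any other real root is negative. -/
theorem hiv_quadratic_unique_positive_root
    (Λ ϱ σ β p ξ b c κ μ₁ μ₂ μ₃ μ₄ μ₅ : ℝ)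
    (hΛ : 0 < Λ) (hϱ : 0 < ϱ) (hσ : 0 < σ) (hβ : 0 < β) (hp : 0 < p)
    (hξ : 0 < ξ) (hb : 0 < b) (hc : 0 < c) (hκ : 0 < κ)
    (hμ₁ : 0 < μ₁) (hμ₂ : 0 < μ₂) (hμ₃ : 0 < μ₃) (hμ₄ : 0 < μ₄) (hμ₅ : 0 < μ₅)
    (hμ₅c : μ₅ > c)
    (R₀ : ℝ)
    (hR₀ : R₀ = β * Λ * μ₅ * σ * ξ /
      (μ₄ * (b * p + μ₃ * μ₅) * (μ₁ * (μ₂ + ϱ) + μ₂ * σ)))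
    (hR₀gt : R₀ > 1)
    (A B C : ℝ)
    (hA : A = -(β * ξ) * (μ₁ + σ) * (b * p + μ₃ * (μ₅ - c)))
    (hB : B = -(β * ξ) * (b * κ * p * (μ₁ + σ) + Λ * σ * (c - μ₅) +
          κ * μ₃ * μ₅ * (μ₁ + σ)) +
        μ₄ * (μ₁ * (μ₂ + ϱ) + μ₂ * σ) * (μ₃ * (c - μ₅) - b * p))
    (hC : C = κ * μ₄ * (b * p + μ₃ * μ₅) * (μ₁ * (μ₂ + ϱ) + μ₂ * σ) * (R₀ - 1)) :
    B ^ 2 - 4 * A * C > 0 ∧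
    (A * ((-B - Real.sqrt (B ^ 2 - 4 * A * C)) / (2 * A)) ^ 2 +
        B * ((-B - Real.sqrt (B ^ 2 - 4 * A * C)) / (2 * A)) + C = 0 ∧
      0 < (-B - Real.sqrt (B ^ 2 - 4 * A * C)) / (2 * A)) ∧
    (∀ x : ℝ, A * x ^ 2 + B * x + C = 0 →
      x = (-B - Real.sqrt (B ^ 2 - 4 * A * C)) / (2 * A) ∨ x < 0) :=
  hiv_quadratic_unique_positive_root_general ϱ σ β p ξ b c κ μ₁ μ₂ μ₃ μ₄ μ₅ hϱ hσ hβ hp hξ hb hκ hμ₁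
    hμ₂ hμ₃ hμ₄ hμ₅ hμ₅c R₀ hR₀gt A B C hA hC
end

section
/- Assume μ₅ > c and R₀ > 1. Then the within-host HIV model has exactly one equilibrium (Q*, T*, I*, V*, Z*) with all five coordinates strictly positive. -/
/-!
Equations 4, 5, 3 and 1 solve successively for V, Z, T and Q as explicit functions of the
infected-cell level I > 0 (the one for Z needs μ₅ > c to keep its denominator positive).
What remains of equation 2 is a quadratic equation in I with positive leading coefficient and
a constant term that is a positive multiple of 1 - R₀, so for R₀ > 1 it has exactly one
positive root.
-/

theorem existsUnique_pos_root_of_quadratic {a b c : ℝ} (ha : 0 < a) (hc : c < 0) :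
    ∃! x : ℝ, 0 < x ∧ a * (x * x) + b * x + c = 0 := by
  have hdisc : b ^ 2 < discrim a b c := by rw [discrim]; nlinarith
  set s := √(discrim a b c)
  have hs : discrim a b c = s * s := (Real.mul_self_sqrt ((sq_nonneg b).trans hdisc.le)).symm
  have hbs : |b| < s := Real.lt_sqrt_of_sq_lt (by rwa [sq_abs])
  have hpos : 0 < (-b + s) / (2 * a) := div_pos (by linarith [le_abs_self b]) (by positivity)
  have hneg : (-b - s) / (2 * a) < 0 :=
    div_neg_of_neg_of_pos (by linarith [neg_le_abs b]) (by positivity)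
  simp_rw [quadratic_eq_zero_iff ha.ne' hs]
  refine ⟨_, ⟨hpos, Or.inl rfl⟩, ?_⟩
  rintro x ⟨hx, rfl | rfl⟩
  · rfl
  · exact absurd hx hneg.not_gt

theorem Function.LeftInverse.existsUnique_of_forall_iff {α β : Type*} {P : α → Prop}
    {R : β → Prop} {f : α → β} {g : β → α} (hfg : Function.LeftInverse f g) (hR : ∃! y, R y)
    (h : ∀ x, P x ↔ R (f x) ∧ x = g (f x)) : ∃! x, P x := by
  obtain ⟨y, hy, huniq⟩ := hR
  refine ⟨g y, (h _).2 ⟨by rwa [hfg], by rw [hfg]⟩, fun x hx => ?_⟩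
  obtain ⟨hRx, hx⟩ := (h x).1 hx
  rw [hx, huniq _ hRx]

noncomputable section

namespace HIV

variable (Λ ϱ σ β p ξ b c κ μ₁ μ₂ μ₃ μ₄ μ₅ : ℝ)

def IsPositiveEquilibrium (Q T I V Z : ℝ) : Prop :=
  0 < Q ∧ 0 < T ∧ 0 < I ∧ 0 < V ∧ 0 < Z ∧
    Λ + ϱ * T - σ * Q - μ₁ * Q = 0 ∧
    σ * Q - β * T * V - ϱ * T - μ₂ * T = 0 ∧
    β * T * V - μ₃ * I - p * I * Z = 0 ∧
    ξ * I - μ₄ * V = 0 ∧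
    b + c * I * Z / (κ + I) - μ₅ * Z = 0

def immuneLevel (I : ℝ) : ℝ := b * (κ + I) / (μ₅ * κ + (μ₅ - c) * I)

def virusLevel (I : ℝ) : ℝ := ξ * I / μ₄

def targetLevel (Z : ℝ) : ℝ := μ₄ * (μ₃ + p * Z) / (β * ξ)

def quiescentLevel (T : ℝ) : ℝ := (Λ + ϱ * T) / (σ + μ₁)

def equilibriumOf (I : ℝ) : ℝ × ℝ × ℝ × ℝ × ℝ :=
  let T := targetLevel β p ξ μ₃ μ₄ (immuneLevel b c κ μ₅ I)
  (quiescentLevel Λ ϱ σ μ₁ T, T, I, virusLevel ξ μ₄ I, immuneLevel b c κ μ₅ I)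

/-- `βξ(μ₅κ + (μ₅ - c)I)` times `T(I) ((σ + μ₁)βV(I) + μ₁(μ₂ + ϱ) + μ₂σ) - σΛ`, where `T(I)` and
`V(I)` are the target-cell and virus levels forced by `I`. -/
def equilibriumQuadratic (I : ℝ) : ℝ :=
  ((μ₃ * (μ₅ - c) + p * b) * I + (μ₃ * μ₅ + p * b) * κ) *
      ((σ + μ₁) * β * ξ * I + μ₄ * (μ₁ * (μ₂ + ϱ) + μ₂ * σ)) -
    σ * Λ * β * ξ * (μ₅ * κ + (μ₅ - c) * I)

variable {Λ ϱ σ β p ξ b c κ μ₁ μ₂ μ₃ μ₄ μ₅}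

theorem immuneLevel_pos (hb : 0 < b) (hκ : 0 < κ) (hμ₅ : 0 < μ₅) (hμ₅c : c < μ₅) {I : ℝ}
    (hI : 0 < I) : 0 < immuneLevel b c κ μ₅ I := by
  have := sub_pos.2 hμ₅c
  unfold immuneLevel; positivity

theorem targetLevel_pos (hβ : 0 < β) (hp : 0 < p) (hξ : 0 < ξ) (hμ₃ : 0 < μ₃) (hμ₄ : 0 < μ₄)
    {Z : ℝ} (hZ : 0 < Z) : 0 < targetLevel β p ξ μ₃ μ₄ Z := by
  unfold targetLevel; positivity

theorem quiescentLevel_pos (hΛ : 0 < Λ) (hϱ : 0 < ϱ) (hσ : 0 < σ) (hμ₁ : 0 < μ₁) {T : ℝ}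
    (hT : 0 < T) : 0 < quiescentLevel Λ ϱ σ μ₁ T := by
  unfold quiescentLevel; positivity

theorem virusLevel_pos (hξ : 0 < ξ) (hμ₄ : 0 < μ₄) {I : ℝ} (hI : 0 < I) :
    0 < virusLevel ξ μ₄ I := by
  unfold virusLevel; positivity

theorem virus_equation_iff (hμ₄ : μ₄ ≠ 0) {I V : ℝ} :
    ξ * I - μ₄ * V = 0 ↔ V = virusLevel ξ μ₄ I := by
  rw [virusLevel, eq_div_iff hμ₄]
  constructor <;> intro h <;> linarith

theorem immune_equation_iff {I Z : ℝ} (hκI : κ + I ≠ 0) (hD : μ₅ * κ + (μ₅ - c) * I ≠ 0) :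
    b + c * I * Z / (κ + I) - μ₅ * Z = 0 ↔ Z = immuneLevel b c κ μ₅ I := by
  have h : b + c * I * Z / (κ + I) - μ₅ * Z
      = (b * (κ + I) - Z * (μ₅ * κ + (μ₅ - c) * I)) / (κ + I) := by
    field_simp; ring
  rw [h, div_eq_zero_iff, or_iff_left hκI, sub_eq_zero, eq_comm, immuneLevel, eq_div_iff hD]

theorem infection_equation_iff (hβ : β ≠ 0) (hξ : ξ ≠ 0) (hμ₄ : μ₄ ≠ 0) {T I Z : ℝ} (hI : I ≠ 0) :
    β * T * virusLevel ξ μ₄ I - μ₃ * I - p * I * Z = 0 ↔ T = targetLevel β p ξ μ₃ μ₄ Z := by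
  have h : β * T * virusLevel ξ μ₄ I - μ₃ * I - p * I * Z
      = I * (β * ξ * T - μ₄ * (μ₃ + p * Z)) / μ₄ := by
    unfold virusLevel; field_simp; ring
  rw [h, div_eq_zero_iff, or_iff_left hμ₄, mul_eq_zero, or_iff_right hI, sub_eq_zero,
    targetLevel, eq_div_iff (mul_ne_zero hβ hξ), mul_comm T]

theorem cell_equations_iff (hσμ₁ : σ + μ₁ ≠ 0) {Q T V : ℝ} :
    (Λ + ϱ * T - σ * Q - μ₁ * Q = 0 ∧ σ * Q - β * T * V - ϱ * T - μ₂ * T = 0) ↔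
      Q = quiescentLevel Λ ϱ σ μ₁ T ∧
        T * ((σ + μ₁) * β * V + (μ₁ * (μ₂ + ϱ) + μ₂ * σ)) = σ * Λ := by
  rw [quiescentLevel, eq_div_iff hσμ₁]
  constructor
  · rintro ⟨h₁, h₂⟩
    exact ⟨by linear_combination -h₁, by linear_combination -σ * h₁ - (σ + μ₁) * h₂⟩
  · rintro ⟨h₁, h₂⟩
    refine ⟨by linear_combination -h₁, ?_⟩
    rw [← mul_right_inj' hσμ₁, mul_zero]
    linear_combination σ * h₁ - h₂

theorem add_mul_immuneLevel {I : ℝ} (hD : μ₅ * κ + (μ₅ - c) * I ≠ 0) :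
    μ₃ + p * immuneLevel b c κ μ₅ I
      = ((μ₃ * (μ₅ - c) + p * b) * I + (μ₃ * μ₅ + p * b) * κ) / (μ₅ * κ + (μ₅ - c) * I) := by
  rw [immuneLevel, mul_div_assoc', add_div' _ _ _ hD]
  ring

theorem balance_iff_equilibriumQuadratic_eq_zero (hβ : β ≠ 0) (hξ : ξ ≠ 0) (hμ₄ : μ₄ ≠ 0) {I : ℝ}
    (hD : μ₅ * κ + (μ₅ - c) * I ≠ 0) :
    targetLevel β p ξ μ₃ μ₄ (immuneLevel b c κ μ₅ I) *
        ((σ + μ₁) * β * virusLevel ξ μ₄ I + (μ₁ * (μ₂ + ϱ) + μ₂ * σ)) = σ * Λ ↔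
      equilibriumQuadratic Λ ϱ σ β p ξ b c κ μ₁ μ₂ μ₃ μ₄ μ₅ I = 0 := by
  have h : targetLevel β p ξ μ₃ μ₄ (immuneLevel b c κ μ₅ I) *
        ((σ + μ₁) * β * virusLevel ξ μ₄ I + (μ₁ * (μ₂ + ϱ) + μ₂ * σ)) - σ * Λ
      = equilibriumQuadratic Λ ϱ σ β p ξ b c κ μ₁ μ₂ μ₃ μ₄ μ₅ I /
          (β * ξ * (μ₅ * κ + (μ₅ - c) * I)) := by
    rw [targetLevel, add_mul_immuneLevel hD, virusLevel, equilibriumQuadratic]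
    generalize μ₅ * κ + (μ₅ - c) * I = D at hD ⊢
    field_simp
  rw [← sub_eq_zero, h, div_eq_zero_iff, or_iff_left (by positivity)]

theorem isPositiveEquilibrium_iff (hΛ : 0 < Λ) (hϱ : 0 < ϱ) (hσ : 0 < σ) (hβ : 0 < β)
    (hp : 0 < p) (hξ : 0 < ξ) (hb : 0 < b) (hκ : 0 < κ) (hμ₁ : 0 < μ₁) (hμ₃ : 0 < μ₃)
    (hμ₄ : 0 < μ₄) (hμ₅ : 0 < μ₅) (hμ₅c : c < μ₅) {Q T I V Z : ℝ} :
    IsPositiveEquilibrium Λ ϱ σ β p ξ b c κ μ₁ μ₂ μ₃ μ₄ μ₅ Q T I V Z ↔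
      (0 < I ∧ equilibriumQuadratic Λ ϱ σ β p ξ b c κ μ₁ μ₂ μ₃ μ₄ μ₅ I = 0) ∧
        (Q, T, I, V, Z) = equilibriumOf Λ ϱ σ β p ξ b c κ μ₁ μ₃ μ₄ μ₅ I := by
  simp only [IsPositiveEquilibrium, equilibriumOf, Prod.mk.injEq, true_and]
  by_cases hI : 0 < I
  swap
  · simp [hI]
  have hD : 0 < μ₅ * κ + (μ₅ - c) * I := by have := sub_pos.2 hμ₅c; positivity
  rw [virus_equation_iff hμ₄.ne', immune_equation_iff (by positivity) hD.ne']
  constructor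
  · rintro ⟨-, -, -, -, -, h₁, h₂, h₃, rfl, rfl⟩
    rw [infection_equation_iff hβ.ne' hξ.ne' hμ₄.ne' hI.ne'] at h₃
    obtain ⟨rfl, hbal⟩ := (cell_equations_iff (by positivity)).1 ⟨h₁, h₂⟩
    subst h₃
    exact ⟨⟨hI, (balance_iff_equilibriumQuadratic_eq_zero hβ.ne' hξ.ne' hμ₄.ne' hD.ne').1 hbal⟩,
      rfl, rfl, rfl, rfl⟩
  · rintro ⟨⟨-, hquad⟩, rfl, rfl, rfl, rfl⟩
    have hZ := immuneLevel_pos hb hκ hμ₅ hμ₅c hI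
    have hT := targetLevel_pos hβ hp hξ hμ₃ hμ₄ hZ
    obtain ⟨h₁, h₂⟩ := (cell_equations_iff (by positivity)).2
      ⟨rfl, (balance_iff_equilibriumQuadratic_eq_zero hβ.ne' hξ.ne' hμ₄.ne' hD.ne').2 hquad⟩
    exact ⟨quiescentLevel_pos hΛ hϱ hσ hμ₁ hT, hT, hI, virusLevel_pos hξ hμ₄ hI, hZ, h₁, h₂,
      (infection_equation_iff hβ.ne' hξ.ne' hμ₄.ne' hI.ne').2 rfl, rfl, rfl⟩

theorem existsUnique_pos_root_equilibriumQuadratic (hσ : 0 < σ) (hβ : 0 < β)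
    (hp : 0 < p) (hξ : 0 < ξ) (hb : 0 < b) (hκ : 0 < κ) (hμ₁ : 0 < μ₁) (hμ₃ : 0 < μ₃)
    (hμ₅c : c < μ₅)
    (hR₀ : μ₄ * (b * p + μ₃ * μ₅) * (μ₁ * (μ₂ + ϱ) + μ₂ * σ) < β * Λ * μ₅ * σ * ξ) :
    ∃! I, 0 < I ∧ equilibriumQuadratic Λ ϱ σ β p ξ b c κ μ₁ μ₂ μ₃ μ₄ μ₅ I = 0 := by
  have hA : 0 < (μ₃ * (μ₅ - c) + p * b) * ((σ + μ₁) * β * ξ) := by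
    have := sub_pos.2 hμ₅c; positivity
  have hC : (μ₃ * μ₅ + p * b) * κ * (μ₄ * (μ₁ * (μ₂ + ϱ) + μ₂ * σ))
      - σ * Λ * β * ξ * μ₅ * κ < 0 := by
    linear_combination mul_pos hκ (sub_pos.2 hR₀)
  refine (existsUnique_congr fun I => and_congr_right fun _ => ?_).1
    (existsUnique_pos_root_of_quadratic hA hC
      (b := (μ₃ * (μ₅ - c) + p * b) * (μ₄ * (μ₁ * (μ₂ + ϱ) + μ₂ * σ))
        + (μ₃ * μ₅ + p * b) * κ * ((σ + μ₁) * β * ξ) - σ * Λ * β * ξ * (μ₅ - c)))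
  rw [equilibriumQuadratic]
  constructor <;> intro h <;> linear_combination h

end HIV

end

theorem hiv_unique_positive_equilibrium_general
    (Λ ϱ σ β p ξ b c κ μ₁ μ₂ μ₃ μ₄ μ₅ : ℝ)
    (hΛ : 0 < Λ) (hϱ : 0 < ϱ) (hσ : 0 < σ) (hβ : 0 < β) (hp : 0 < p)
    (hξ : 0 < ξ) (hb : 0 < b) (hκ : 0 < κ)
    (hμ₁ : 0 < μ₁) (hμ₂ : 0 < μ₂) (hμ₃ : 0 < μ₃) (hμ₄ : 0 < μ₄) (hμ₅ : 0 < μ₅)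
    (hμ₅c : μ₅ > c)
    (R₀ : ℝ)
    (hR₀ : R₀ = β * Λ * μ₅ * σ * ξ /
      (μ₄ * (b * p + μ₃ * μ₅) * (μ₁ * (μ₂ + ϱ) + μ₂ * σ)))
    (hR₀gt : R₀ > 1) :
    ∃! E : ℝ × ℝ × ℝ × ℝ × ℝ,
      0 < E.1 ∧ 0 < E.2.1 ∧ 0 < E.2.2.1 ∧ 0 < E.2.2.2.1 ∧ 0 < E.2.2.2.2 ∧
      Λ + ϱ * E.2.1 - σ * E.1 - μ₁ * E.1 = 0 ∧
      σ * E.1 - β * E.2.1 * E.2.2.2.1 - ϱ * E.2.1 - μ₂ * E.2.1 = 0 ∧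
      β * E.2.1 * E.2.2.2.1 - μ₃ * E.2.2.1 - p * E.2.2.1 * E.2.2.2.2 = 0 ∧
      ξ * E.2.2.1 - μ₄ * E.2.2.2.1 = 0 ∧
      b + c * E.2.2.1 * E.2.2.2.2 / (κ + E.2.2.1) - μ₅ * E.2.2.2.2 = 0 := by
  rw [hR₀, gt_iff_lt, one_lt_div (by positivity)] at hR₀gt
  refine Function.LeftInverse.existsUnique_of_forall_iff (f := fun E => E.2.2.1)
    (g := HIV.equilibriumOf Λ ϱ σ β p ξ b c κ μ₁ μ₃ μ₄ μ₅) (fun _ => rfl)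
    (HIV.existsUnique_pos_root_equilibriumQuadratic hσ hβ hp hξ hb hκ hμ₁ hμ₃ hμ₅c hR₀gt)
    (fun ⟨_, _, _, _, _⟩ =>
      HIV.isPositiveEquilibrium_iff hΛ hϱ hσ hβ hp hξ hb hκ hμ₁ hμ₃ hμ₄ hμ₅ hμ₅c (μ₂ := μ₂))

/-- If `μ₅ > c` and `R₀ > 1`, the within-host HIV model has exactly one equilibrium
with all five coordinates strictly positive. -/
theorem hiv_unique_positive_equilibrium
    (Λ ϱ σ β p ξ b c κ μ₁ μ₂ μ₃ μ₄ μ₅ : ℝ)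
    (hΛ : 0 < Λ) (hϱ : 0 < ϱ) (hσ : 0 < σ) (hβ : 0 < β) (hp : 0 < p)
    (hξ : 0 < ξ) (hb : 0 < b) (hc : 0 < c) (hκ : 0 < κ)
    (hμ₁ : 0 < μ₁) (hμ₂ : 0 < μ₂) (hμ₃ : 0 < μ₃) (hμ₄ : 0 < μ₄) (hμ₅ : 0 < μ₅)
    (hμ₅c : μ₅ > c)
    (R₀ : ℝ)
    (hR₀ : R₀ = β * Λ * μ₅ * σ * ξ /
      (μ₄ * (b * p + μ₃ * μ₅) * (μ₁ * (μ₂ + ϱ) + μ₂ * σ)))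
    (hR₀gt : R₀ > 1) :
    ∃! E : ℝ × ℝ × ℝ × ℝ × ℝ,
      0 < E.1 ∧ 0 < E.2.1 ∧ 0 < E.2.2.1 ∧ 0 < E.2.2.2.1 ∧ 0 < E.2.2.2.2 ∧
      Λ + ϱ * E.2.1 - σ * E.1 - μ₁ * E.1 = 0 ∧
      σ * E.1 - β * E.2.1 * E.2.2.2.1 - ϱ * E.2.1 - μ₂ * E.2.1 = 0 ∧
      β * E.2.1 * E.2.2.2.1 - μ₃ * E.2.2.1 - p * E.2.2.1 * E.2.2.2.2 = 0 ∧
      ξ * E.2.2.1 - μ₄ * E.2.2.2.1 = 0 ∧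
      b + c * E.2.2.1 * E.2.2.2.2 / (κ + E.2.2.1) - μ₅ * E.2.2.2.2 = 0 :=
  hiv_unique_positive_equilibrium_general Λ ϱ σ β p ξ b c κ μ₁ μ₂ μ₃ μ₄ μ₅ hΛ hϱ hσ hβ hp hξ hb hκ
    hμ₁ hμ₂ hμ₃ hμ₄ hμ₅ hμ₅c R₀ hR₀ hR₀gt
end

section
/- Let α₁, α₂, α₃, α₄, α₅, α₆, μ₁, μ₄, σ, ϱ be positive reals with α₂ − ϱ > 0 and α₂ − α₆ > 0. Define ξ₁ = α₅ + μ₄ + α₁ + α₂ + σ + μ₁, ξ₂ = α₁α₂ + α₁α₅ + α₁μ₁ + α₁σ + α₂α₅ + α₂μ₁ + α₂μ₄ + α₃α₄ + α₅μ₁ + α₅μ₄ + α₅σ + μ₁μ₄ + μ₄σ + σ(α₂ − ϱ), and ξ₃ = α₁α₂α₅ + α₁α₂μ₁ + α₁α₅μ₁ + α₁α₅σ + α₁α₆μ₄ + α₂α₃α₄ + α₂α₅μ₁ + α₂α₅μ₄ + α₂μ₁μ₄ + α₃α₄μ₁ + α₃α₄μ₄ + α₃α₄σ + α₅μ₁μ₄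 + α₅μ₄σ + σ(α₁ + α₅ + μ₄)(α₂ − ϱ). Then ξ₁ξ₂ − ξ₃ > 0. -/
/-!
Every monomial of `ξ₃` already occurs in the expansion of `ξ₁ξ₂`, except `α₁α₆μ₄`, which is
dominated by `α₁α₂μ₄` because `α₆ < α₂`. Hence `ξ₁ξ₂ − ξ₃` is the sum of positive terms carrying
`α₃α₄`, `α₂ − ϱ` and `α₂ − α₆`, and of a cubic with nonnegative coefficients.
-/

/-- `ξ₁ξ₂ − ξ₃` at `α₃α₄ = 0`, `ϱ = α₂`, `α₆ = α₂`, in the variables `α₁ α₂ α₅ μ₁ μ₄ σ`.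
The quadratic factor sums `xy` over the edges of a graph on the six variables and the subtracted
cubic runs over its triangles; each triangle occurs three times in the product and `a * b * n`
twice, so the expansion has nonnegative coefficients. -/
def hivHurwitzResidual (a b d m n s : ℝ) : ℝ :=
  (a + b + d + m + n + s) *
      (a * b + a * d + a * m + a * s + b * d + b * m + b * n + d * m + d * n + d * s +
        m * n + n * s) -
    (a * b * d + a * b * m + a * d * m + a * d * s + b * d * m + b * d * n + b * m * n +
      d * m * n + d * n * s) -
    a * b * n

theorem hivHurwitzResidual_nonneg {a b d m n s : ℝ} (ha : 0 ≤ a) (hb : 0 ≤ b) (hd : 0 ≤ d)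
    (hm : 0 ≤ m) (hn : 0 ≤ n) (hs : 0 ≤ s) : 0 ≤ hivHurwitzResidual a b d m n s := by
  unfold hivHurwitzResidual
  ring_nf
  positivity

theorem hiv_routh_hurwitz_xi1xi2_sub_xi3_pos_general
    (α₁ α₂ α₃ α₄ α₅ α₆ μ₁ μ₄ σ ϱ : ℝ)
    (hα₁ : 0 < α₁) (hα₂ : 0 < α₂) (hα₃ : 0 < α₃) (hα₄ : 0 < α₄) (hα₅ : 0 < α₅)
    (hμ₁ : 0 < μ₁) (hμ₄ : 0 < μ₄) (hσ : 0 < σ)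
    (h₂ϱ : α₂ - ϱ > 0) (h₂₆ : α₂ - α₆ > 0)
    (ξ₁ ξ₂ ξ₃ : ℝ)
    (hξ₁ : ξ₁ = α₅ + μ₄ + α₁ + α₂ + σ + μ₁)
    (hξ₂ : ξ₂ = α₁ * α₂ + α₁ * α₅ + α₁ * μ₁ + α₁ * σ + α₂ * α₅ + α₂ * μ₁ +
        α₂ * μ₄ + α₃ * α₄ + α₅ * μ₁ + α₅ * μ₄ + α₅ * σ + μ₁ * μ₄ + μ₄ * σ +
        σ * (α₂ - ϱ))
    (hξ₃ : ξ₃ = α₁ * α₂ * α₅ + α₁ * α₂ * μ₁ + α₁ * α₅ * μ₁ + α₁ * α₅ * σ +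
        α₁ * α₆ * μ₄ + α₂ * α₃ * α₄ + α₂ * α₅ * μ₁ + α₂ * α₅ * μ₄ +
        α₂ * μ₁ * μ₄ + α₃ * α₄ * μ₁ + α₃ * α₄ * μ₄ + α₃ * α₄ * σ +
        α₅ * μ₁ * μ₄ + α₅ * μ₄ * σ + σ * (α₁ + α₅ + μ₄) * (α₂ - ϱ)) :
    ξ₁ * ξ₂ - ξ₃ > 0 := by
  have hsplit : ξ₁ * ξ₂ - ξ₃ = α₃ * α₄ * (α₁ + α₅) + σ * (α₂ - ϱ) * (α₂ + μ₁ + σ) +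
      α₁ * μ₄ * (α₂ - α₆) + hivHurwitzResidual α₁ α₂ α₅ μ₁ μ₄ σ := by
    subst hξ₁ hξ₂ hξ₃
    unfold hivHurwitzResidual
    ring
  have hresidual := hivHurwitzResidual_nonneg hα₁.le hα₂.le hα₅.le hμ₁.le hμ₄.le hσ.le
  rw [hsplit]
  positivity

/-- The second Routh–Hurwitz quantity `ξ₁ξ₂ − ξ₃` is positive, given
`α₂ − ϱ > 0` and `α₂ − α₆ > 0`. -/
theorem hiv_routh_hurwitz_xi1xi2_sub_xi3_pos
    (α₁ α₂ α₃ α₄ α₅ α₆ μ₁ μ₄ σ ϱ : ℝ)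
    (hα₁ : 0 < α₁) (hα₂ : 0 < α₂) (hα₃ : 0 < α₃) (hα₄ : 0 < α₄) (hα₅ : 0 < α₅)
    (hα₆ : 0 < α₆) (hμ₁ : 0 < μ₁) (hμ₄ : 0 < μ₄) (hσ : 0 < σ) (hϱ : 0 < ϱ)
    (h₂ϱ : α₂ - ϱ > 0) (h₂₆ : α₂ - α₆ > 0)
    (ξ₁ ξ₂ ξ₃ : ℝ)
    (hξ₁ : ξ₁ = α₅ + μ₄ + α₁ + α₂ + σ + μ₁)
    (hξ₂ : ξ₂ = α₁ * α₂ + α₁ * α₅ + α₁ * μ₁ + α₁ * σ + α₂ * α₅ + α₂ * μ₁ +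
        α₂ * μ₄ + α₃ * α₄ + α₅ * μ₁ + α₅ * μ₄ + α₅ * σ + μ₁ * μ₄ + μ₄ * σ +
        σ * (α₂ - ϱ))
    (hξ₃ : ξ₃ = α₁ * α₂ * α₅ + α₁ * α₂ * μ₁ + α₁ * α₅ * μ₁ + α₁ * α₅ * σ +
        α₁ * α₆ * μ₄ + α₂ * α₃ * α₄ + α₂ * α₅ * μ₁ + α₂ * α₅ * μ₄ +
        α₂ * μ₁ * μ₄ + α₃ * α₄ * μ₁ + α₃ * α₄ * μ₄ + α₃ * α₄ * σ +
        α₅ * μ₁ * μ₄ + α₅ * μ₄ * σ + σ * (α₁ + α₅ + μ₄) * (α₂ - ϱ)) :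
    ξ₁ * ξ₂ - ξ₃ > 0 :=
  hiv_routh_hurwitz_xi1xi2_sub_xi3_pos_general α₁ α₂ α₃ α₄ α₅ α₆ μ₁ μ₄ σ ϱ hα₁ hα₂ hα₃ hα₄ hα₅ hμ₁
    hμ₄ hσ h₂ϱ h₂₆ ξ₁ ξ₂ ξ₃ hξ₁ hξ₂ hξ₃
end

section
/- Let M be the 2×2 real matrix with rows (−μ₃ − bp/μ₅, βΛσ/(μ₁(μ₂+ϱ)+μ₂σ)) and (ξ, −μ₄). If R₀ > 1, then M has a real eigenvalue K > 0 admitting an eigenvector (x₁, x₂) with x₁ > 0 and x₂ > 0 (so M·x = K·x). -/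
/-!
A Metzler matrix `!![a, b; c, d]` with `b c > 0` has the real eigenvalue
`K = (a + d + √((a - d)² + 4bc)) / 2`, the larger root of its characteristic polynomial, with
eigenvector `(b, K - a)`; the discriminant exceeds `(a - d)²`, so `K > a`. The product of the two
roots is `ad - bc`, so `K > 0` as soon as `ad < bc`, and for the HIV matrix that inequality,
multiplied out, is `R₀ > 1`.
-/

open Matrix

noncomputable def perronRoot₂ (a b c d : ℝ) : ℝ := (a + d + √((a - d) ^ 2 + 4 * b * c)) / 2

section perronRoot₂

variable {a b c d : ℝ}

lemma perronRoot₂_sub_left_pos (hbc : 0 < b * c) : 0 < perronRoot₂ a b c d - a := by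
  have hs : a - d < √((a - d) ^ 2 + 4 * b * c) := Real.lt_sqrt_of_sq_lt (by linarith)
  unfold perronRoot₂
  linarith

lemma perronRoot₂_pos (hdet : a * d < b * c) : 0 < perronRoot₂ a b c d := by
  have hs : -(a + d) < √((a - d) ^ 2 + 4 * b * c) := Real.lt_sqrt_of_sq_lt (by linarith)
  unfold perronRoot₂
  linarith

lemma perronRoot₂_charpoly_eq_zero (hbc : 0 ≤ b * c) :
    perronRoot₂ a b c d ^ 2 - (a + d) * perronRoot₂ a b c d + (a * d - b * c) = 0 := by
  have hs : √((a - d) ^ 2 + 4 * b * c) ^ 2 = (a - d) ^ 2 + 4 * b * c :=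
    Real.sq_sqrt (by nlinarith [sq_nonneg (a - d)])
  unfold perronRoot₂
  linear_combination hs / 4

lemma mulVec_perronVector₂ (hbc : 0 ≤ b * c) :
    !![a, b; c, d] *ᵥ ![b, perronRoot₂ a b c d - a] =
      perronRoot₂ a b c d • ![b, perronRoot₂ a b c d - a] := by
  ext i
  fin_cases i <;>
    simp only [Fin.zero_eta, Fin.mk_one, mulVec_cons, mulVec_empty, add_zero, Pi.add_apply,
      Pi.smul_apply, Function.comp_apply, smul_eq_mul, cons_val_zero, cons_val_one, head_cons,
      tail_cons]
  · ring
  · linear_combination -perronRoot₂_charpoly_eq_zero hbc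

end perronRoot₂

/-- If `R₀ > 1`, the Metzler matrix `M` appearing in the persistence argument has a
positive eigenvalue with a strictly positive eigenvector. -/
theorem hiv_metzler_positive_eigenvalue
    (Λ β σ ξ b p ϱ μ₁ μ₂ μ₃ μ₄ μ₅ : ℝ)
    (hΛ : 0 < Λ) (hβ : 0 < β) (hσ : 0 < σ) (hξ : 0 < ξ) (hb : 0 < b) (hp : 0 < p)
    (hϱ : 0 < ϱ) (hμ₁ : 0 < μ₁) (hμ₂ : 0 < μ₂) (hμ₃ : 0 < μ₃) (hμ₄ : 0 < μ₄)
    (hμ₅ : 0 < μ₅)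
    (R₀ : ℝ)
    (hR₀ : R₀ = β * Λ * μ₅ * σ * ξ /
      (μ₄ * (b * p + μ₃ * μ₅) * (μ₁ * (μ₂ + ϱ) + μ₂ * σ)))
    (hR₀gt : R₀ > 1)
    (M : Matrix (Fin 2) (Fin 2) ℝ)
    (hM : M = !![-μ₃ - b * p / μ₅, β * Λ * σ / (μ₁ * (μ₂ + ϱ) + μ₂ * σ);
                 ξ, -μ₄]) :
    ∃ K : ℝ, 0 < K ∧ ∃ x : Fin 2 → ℝ, 0 < x 0 ∧ 0 < x 1 ∧ M.mulVec x = K • x := by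
  set D := μ₁ * (μ₂ + ϱ) + μ₂ * σ
  have hD : 0 < D := by positivity
  have hoff : 0 < β * Λ * σ / D := by positivity
  have hdet : (-μ₃ - b * p / μ₅) * -μ₄ < β * Λ * σ / D * ξ := by
    have h := (one_lt_div (by positivity)).1 (hR₀ ▸ hR₀gt)
    field_simp
    linarith
  subst hM
  exact ⟨_, perronRoot₂_pos hdet, _, hoff, perronRoot₂_sub_left_pos (by positivity),
    mulVec_perronVector₂ (by positivity)⟩
end

section
/- Let Λ, ϱ, σ, μ₁, μ₂ be positive reals and let Q, T : ℝ → ℝ be differentiable functions satisfying, for all t ≥ 0, Q'(t) = Λ + ϱ·T(t) − (σ + μ₁)·Q(t) and T'(t) = σ·Q(t) − (ϱ + μ₂)·T(t), with Q(0) > 0 and T(0) > 0. Then (Q(t), T(t)) converges as t → ∞ to the equilibrium (Q*, T*) = (Λ(μ₂+ϱ)/(μ₁(μ₂+ϱ)+μ₂σ), Λσ/(μ₁(μ₂+ϱ)+μ₂σ)). -/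
/-!
The deviations `x = Q - Q*`, `y = T - T*` solve the homogeneous system `x' = -(σ+μ₁) x + ϱ y`,
`y' = σ x - (ϱ+μ₂) y`, whose matrix has negative trace, positive determinant and positive
discriminant, hence two distinct negative real eigenvalues `l₁`, `l₂`. For each of them the
left-eigenvector combination `σ x + (l + σ + μ₁) y` solves `φ' = l φ`, so it decays like
`exp (l t)`; since the two eigenvectors are independent, `x` and `y` tend to `0`.
-/

open Filter Topology

theorem eq_mul_exp_of_deriv_eq_mul {k : ℝ} {f : ℝ → ℝ} (hf : Differentiable ℝ f)
    (hf' : ∀ t, 0 ≤ t → deriv f t = k * f t) {t : ℝ} (ht : 0 ≤ t) :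
    f t = f 0 * Real.exp (k * t) := by
  have hconst : ∀ u ∈ Set.Icc 0 t,
      f u * Real.exp (-(k * u)) = f 0 * Real.exp (-(k * 0)) := by
    refine constant_of_has_deriv_right_zero
      (hf.continuous.mul (by fun_prop)).continuousOn fun u hu => ?_
    have hfu : HasDerivAt f (k * f u) u := hf' u hu.1 ▸ (hf u).hasDerivAt
    have := hfu.mul ((hasDerivAt_id u).const_mul k).neg.exp
    refine (this.congr_deriv ?_).hasDerivWithinAt
    simp only [id]; ring
  have := hconst t ⟨ht, le_rfl⟩
  rw [mul_zero, neg_zero, Real.exp_zero, mul_one, Real.exp_neg] at this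
  field_simp at this
  rw [this, mul_comm]

theorem tendsto_zero_of_deriv_eq_mul_of_neg {k : ℝ} (hk : k < 0) {f : ℝ → ℝ}
    (hf : Differentiable ℝ f) (hf' : ∀ t, 0 ≤ t → deriv f t = k * f t) :
    Tendsto f atTop (𝓝 0) := by
  have hexp : Tendsto (fun t => f 0 * Real.exp (k * t)) atTop (𝓝 0) := by
    simpa using (Real.tendsto_exp_atBot.comp
      ((tendsto_const_mul_atBot_of_neg hk).2 tendsto_id)).const_mul (f 0)
  refine hexp.congr' ?_
  filter_upwards [eventually_ge_atTop 0] with t ht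
  exact (eq_mul_exp_of_deriv_eq_mul hf hf' ht).symm

section PlanarLinear

variable {α β γ δ : ℝ} {x y : ℝ → ℝ}

theorem deriv_eigencombination_eq_mul (hx : Differentiable ℝ x) (hy : Differentiable ℝ y)
    (hx' : ∀ t, 0 ≤ t → deriv x t = α * x t + β * y t)
    (hy' : ∀ t, 0 ≤ t → deriv y t = γ * x t + δ * y t)
    {l : ℝ} (hl : l ^ 2 - (α + δ) * l + (α * δ - β * γ) = 0) {t : ℝ} (ht : 0 ≤ t) :
    deriv (fun t => γ * x t + (l - α) * y t) t = l * (γ * x t + (l - α) * y t) := by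
  rw [(((hx t).hasDerivAt.const_mul γ).fun_add ((hy t).hasDerivAt.const_mul (l - α))).deriv,
    hx' t ht, hy' t ht]
  linear_combination (-y t) * hl

theorem tendsto_zero_of_planar_linear (hx : Differentiable ℝ x) (hy : Differentiable ℝ y)
    (hx' : ∀ t, 0 ≤ t → deriv x t = α * x t + β * y t)
    (hy' : ∀ t, 0 ≤ t → deriv y t = γ * x t + δ * y t)
    (hγ : γ ≠ 0) (htr : α + δ < 0) (hdet : 0 < α * δ - β * γ)
    (hdisc : 0 < (α - δ) ^ 2 + 4 * β * γ) :
    Tendsto x atTop (𝓝 0) ∧ Tendsto y atTop (𝓝 0) := by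
  set r := √((α - δ) ^ 2 + 4 * β * γ)
  have hr : r ^ 2 = (α - δ) ^ 2 + 4 * β * γ := Real.sq_sqrt hdisc.le
  have hr0 : 0 < r := Real.sqrt_pos.2 hdisc
  have decay : ∀ l, l ^ 2 - (α + δ) * l + (α * δ - β * γ) = 0 → l < 0 →
      Tendsto (fun t => γ * x t + (l - α) * y t) atTop (𝓝 0) := fun l hl hneg =>
    tendsto_zero_of_deriv_eq_mul_of_neg hneg (by fun_prop) fun _ ht =>
      deriv_eigencombination_eq_mul hx hy hx' hy' hl ht
  have h₁ := decay ((α + δ + r) / 2) (by linear_combination hr / 4) (by nlinarith)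
  have h₂ := decay ((α + δ - r) / 2) (by linear_combination hr / 4) (by linarith)
  have hy0 : Tendsto y atTop (𝓝 0) := by
    have := (h₁.sub h₂).const_mul r⁻¹
    rw [sub_self, mul_zero] at this
    refine this.congr fun t => ?_
    field_simp
    ring
  have hx0 := (h₁.sub (hy0.const_mul ((α + δ + r) / 2 - α))).const_mul γ⁻¹
  rw [mul_zero, sub_zero, mul_zero] at hx0
  refine ⟨hx0.congr fun t => ?_, hy0⟩
  field_simp
  ring

end PlanarLinear

theorem hiv_infection_free_subsystem_converges_general
    (Λ ϱ σ μ₁ μ₂ : ℝ)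
    (hϱ : 0 < ϱ) (hσ : 0 < σ) (hμ₁ : 0 < μ₁) (hμ₂ : 0 < μ₂)
    (Q T : ℝ → ℝ)
    (hQ : Differentiable ℝ Q) (hT : Differentiable ℝ T)
    (hQ' : ∀ t, 0 ≤ t → deriv Q t = Λ + ϱ * T t - (σ + μ₁) * Q t)
    (hT' : ∀ t, 0 ≤ t → deriv T t = σ * Q t - (ϱ + μ₂) * T t) :
    Tendsto (fun t => (Q t, T t)) atTop
      (nhds (Λ * (μ₂ + ϱ) / (μ₁ * (μ₂ + ϱ) + μ₂ * σ),
             Λ * σ / (μ₁ * (μ₂ + ϱ) + μ₂ * σ))) := by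
  have hd : 0 < μ₁ * (μ₂ + ϱ) + μ₂ * σ := by positivity
  obtain ⟨hQlim, hTlim⟩ := tendsto_zero_of_planar_linear (α := -(σ + μ₁)) (β := ϱ) (γ := σ)
    (δ := -(ϱ + μ₂)) (hQ.sub_const (Λ * (μ₂ + ϱ) / (μ₁ * (μ₂ + ϱ) + μ₂ * σ)))
    (hT.sub_const (Λ * σ / (μ₁ * (μ₂ + ϱ) + μ₂ * σ)))
    (fun t ht => by rw [deriv_sub_const, hQ' t ht]; field_simp; ring)
    (fun t ht => by rw [deriv_sub_const, hT' t ht]; field_simp; ring)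
    hσ.ne' (by linarith) (by nlinarith) (by nlinarith)
  exact (tendsto_sub_nhds_zero_iff.1 hQlim).prodMk_nhds (tendsto_sub_nhds_zero_iff.1 hTlim)

/-- Global convergence of the infection-free planar subsystem: every positive
solution of `Q' = Λ + ϱT − (σ+μ₁)Q`, `T' = σQ − (ϱ+μ₂)T` converges to the
equilibrium `(Q*, T*)`. -/
theorem hiv_infection_free_subsystem_converges
    (Λ ϱ σ μ₁ μ₂ : ℝ)
    (hΛ : 0 < Λ) (hϱ : 0 < ϱ) (hσ : 0 < σ) (hμ₁ : 0 < μ₁) (hμ₂ : 0 < μ₂)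
    (Q T : ℝ → ℝ)
    (hQ : Differentiable ℝ Q) (hT : Differentiable ℝ T)
    (hQ' : ∀ t, 0 ≤ t → deriv Q t = Λ + ϱ * T t - (σ + μ₁) * Q t)
    (hT' : ∀ t, 0 ≤ t → deriv T t = σ * Q t - (ϱ + μ₂) * T t)
    (hQ0 : 0 < Q 0) (hT0 : 0 < T 0) :
    Tendsto (fun t => (Q t, T t)) atTop
      (nhds (Λ * (μ₂ + ϱ) / (μ₁ * (μ₂ + ϱ) + μ₂ * σ),
             Λ * σ / (μ₁ * (μ₂ + ϱ) + μ₂ * σ))) :=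
  hiv_infection_free_subsystem_converges_general Λ ϱ σ μ₁ μ₂ hϱ hσ hμ₁ hμ₂ Q T hQ hT hQ' hT'
end
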